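/- arXiv:1306.2054 — 3 statements merged into one kernel-verified Lean document; each statement's English description precedes it below -/
import Mathlib

section
/- For every k ≥ 1, the symmetric subshift Σ_a with parameter a = ω_{a*,k}''' satisfies lim_{n→∞} (1/n) log₂ |B_n(Σ_a)| = 2^{-k}; that is, its topological entropy equals 1/2^k. -/
open Filter Topology

namespace Paper

/-- One-sided infinite binary sequences (indexed from 0): the space Σ₂. -/
abbrev Seq := ℕ → Bool

/-- The one-sided shift map σ. -/
def shift (x : Seq) : Seq := fun i => x (i + 1)

/-- The mirror image x̄ of a sequence. -/
def mirror (x : Seq) : Seq := fun i => !x i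

/-- Strict lexicographic order: x ≺ y iff x k < y k at the first index k where they differ. -/
def lexLt (x y : Seq) : Prop := ∃ k, (∀ i < k, x i = y i) ∧ x k < y k

/-- Non-strict lexicographic order. -/
def lexLe (x y : Seq) : Prop := lexLt x y ∨ x = y

/-- The symmetric subshift Σ_a = {x : ā ≺ σⁿ x ≺ a for all n ≥ 0}. -/
def SigmaA (a : Seq) : Set Seq :=
  {x | ∀ n : ℕ, lexLt (mirror a) (shift^[n] x) ∧ lexLt (shift^[n] x) a}

/-- A finite word identified with the sequence ω0^∞. -/
def wordSeq (w : List Bool) : Seq := fun i => w.getD i false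

/-- The word w occurs in the sequence x. -/
def occursIn (w : List Bool) (x : Seq) : Prop :=
  ∃ i, ∀ j < w.length, x (i + j) = w.getD j false

/-- B_n(Σ): admissible words of length n. -/
def Bword (S : Set Seq) (n : ℕ) : Set (List Bool) :=
  {w | w.length = n ∧ ∃ x ∈ S, occursIn w x}

/-- The language L(Σ) = ⋃_{n ≥ 1} B_n(Σ). -/
def lang (S : Set Seq) : Set (List Bool) :=
  {w | 1 ≤ w.length ∧ ∃ x ∈ S, occursIn w x}

/-- Transitivity: every ordered pair of admissible words can be bridged. -/
def IsTransitiveShift (S : Set Seq) : Prop :=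
  ∀ u ∈ lang S, ∀ v ∈ lang S, ∃ w : List Bool, (u ++ w ++ v) ∈ lang S

/-- Specification: bridges can be chosen of a fixed length m. -/
def HasSpecification (S : Set Seq) : Prop :=
  ∃ m : ℕ, ∀ u ∈ lang S, ∀ v ∈ lang S,
    ∃ w : List Bool, w.length = m ∧ (u ++ w ++ v) ∈ lang S

/-- Subshift of finite type: defined by a finite set of forbidden words of equal length. -/
def IsSFT (S : Set Seq) : Prop :=
  ∃ (F : Finset (List Bool)) (n : ℕ), (∀ w ∈ F, w.length = n) ∧
    S = {x : Seq | ∀ w ∈ F, ¬ occursIn w x}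

/-- ω''' = w₁…w_m (w̄₁…w̄_{m-1}1)^∞, with the convention 1''' = 1(01)^∞. -/
def triple (w : List Bool) : Seq :=
  if w.length ≤ 1 then fun i => decide (i % 2 = 0)
  else fun i =>
    if i < w.length then w.getD i false
    else if (i - w.length) % w.length = w.length - 1 then true
    else !(w.getD ((i - w.length) % w.length) false)

/-- The Thue–Morse sequence t (t 0 = 0, 0-indexed). -/
def thueMorse (n : ℕ) : Bool := decide (((Nat.digits 2 n).count 1) % 2 = 1)

/-- a* = σ(Thue–Morse sequence) = 1101001100101101… . -/
def astar : Seq := fun i => thueMorse (i + 1)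

/-- ω_{a*,k}: the word formed by the first 2^k digits of a*. -/
def astarWord (k : ℕ) : List Bool := List.ofFn fun j : Fin (2 ^ k) => astar j

/-- a is an i-sequence. -/
def IsISequence (i : ℕ) (a : Seq) : Prop :=
  if i = 0 then lexLt (triple (astarWord 1)) a ∧ lexLt a (fun _ => true)
  else lexLt (triple (astarWord (i + 1))) a ∧ lexLe a (triple (astarWord i))

/-- i-irreducible word (indices of letters are 1-based, as in the paper). -/
def IIrreducible (i : ℕ) (w : List Bool) : Prop :=
  w ≠ [] ∧ w.getLast? = some true ∧ IsISequence i (wordSeq w) ∧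
    ∀ j, 2 ^ i < j → j < w.length → w.getD (j - 1) false = true →
      lexLt (triple (w.take j)) (wordSeq w)

/-- Irreducible word. -/
def IrredWord (w : List Bool) : Prop :=
  w ≠ [] ∧ w.getD 0 false = true ∧ w.getLast? = some true ∧
    ∀ k, 1 ≤ k → k < w.length → w.getD (k - 1) false = true →
      lexLt (triple (w.take k)) (wordSeq w)

/-- Topological entropy h_top(Σ) = lim (1/n) log₂ |B_n(Σ)| (stated via limsup;
the limit exists by subadditivity, so this agrees with the limit). -/
noncomputable def htop (S : Set Seq) : ℝ :=
  Filter.limsup (fun n : ℕ => Real.logb 2 ((Bword S n).ncard) / (n : ℝ)) Filter.atTop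

/-- The sequence (10)^∞. -/
def tenSeq : Seq := fun i => decide (i % 2 = 0)

/-- The sequence 11(01)^∞. -/
def oneoneSeq : Seq := fun i => decide (i = 0 ∨ i % 2 = 1)

/-- Complete invariance of A inside S: σ(A) = A = σ⁻¹(A) ∩ S. -/
def CompletelyInvariant (S A : Set Seq) : Prop :=
  shift '' A = A ∧ shift ⁻¹' A ∩ S = A

/-- Transitive component of a subshift S. -/
def IsTransitiveComponent (S A : Set Seq) : Prop :=
  A ⊆ S ∧ IsClosed A ∧ CompletelyInvariant S A ∧ IsTransitiveShift A ∧
    ∀ A' : Set Seq, A' ⊆ S → IsClosed A' → CompletelyInvariant S A' →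
      (∃ x ∈ A', A' ⊆ closure (Set.range fun n => shift^[n] x)) → ¬A ⊂ A'

/-- The exceptional set 𝓔: parameters a ≻ a* lying in no interval (ω0^∞, ω''')
for any i-irreducible word ω. -/
def exceptionalSet : Set Seq :=
  {a | lexLt astar a ∧ ∀ (i : ℕ) (ω : List Bool), IIrreducible i ω →
    ¬(lexLt (wordSeq ω) a ∧ lexLt a (triple ω))}

/-!
Write `μ` for the Thue–Morse substitution `0 ↦ 01, 1 ↦ 10`. The parameter `ω_{a*,k}'''` is
`b_k`, where `b_0 = 1^∞` and `b_{k+1} = 1 μ(b_k)`.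

Lower bound: `μ^k` maps every sequence containing infinitely many `0`s and `1`s into `Σ_{b_k}`,
and the letters at the positions `2^k i` can be chosen freely, so `|B_n(Σ_{b_k})| ≥ 2^⌊n/2^k⌋`.

Upper bound: in a sequence whose tails obey the one-sided constraints of `b_{k+1}`, two pairs of
equal adjacent letters at odd distance would produce a tail beyond `b_1 = 11(01)^∞`. So after a
constant block and at most one more letter the sequence is `μ(z)` with `z` obeying the
constraints of `b_k`. This gives `|B_n| ≤ 2 + 8n |B_{⌊n/2⌋+1}|` one level down, hence
`|B_n(Σ_{b_k})| ≤ (18(n+1))^k 2^⌊n/2^k⌋`, and the two bounds squeeze `(1/n) log₂ |B_n|` to `2^{-k}`.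
-/

theorem lexLe_iff_toLex_le {x y : Seq} : lexLe x y ↔ toLex x ≤ toLex y := by
  rw [le_iff_lt_or_eq, toLex_inj]; rfl

theorem lexLe_iff_not_lexLt {x y : Seq} : lexLe x y ↔ ¬ lexLt y x :=
  lexLe_iff_toLex_le.trans not_lt.symm

theorem lexLt_of_lexLe_of_lexLt {x y z : Seq} (hxy : lexLe x y) (hyz : lexLt y z) :
    lexLt x z :=
  (lexLe_iff_toLex_le.1 hxy).trans_lt hyz

theorem lexLt_asymm {x y : Seq} (hxy : lexLt x y) : ¬ lexLt y x :=
  lt_asymm (α := Lex Seq) hxy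

theorem lexLt_const_true_iff {x : Seq} : lexLt x (fun _ => true) ↔ ∃ i, x i = false := by
  refine ⟨fun ⟨k, _, hk⟩ => ⟨k, (Bool.lt_iff.1 hk).1⟩, fun ⟨i, hi⟩ => Pi.toLex_strictMono ?_⟩
  exact lt_of_le_of_ne (fun _ => le_top) fun h => by simp [h] at hi

theorem lexLe_const_true (x : Seq) : lexLe x (fun _ => true) :=
  lexLe_iff_toLex_le.2 (Pi.toLex_monotone fun _ => le_top)

theorem mirror_mirror (x : Seq) : mirror (mirror x) = x := by
  funext i; simp [mirror]

theorem lexLt_mirror_iff {x y : Seq} : lexLt (mirror x) (mirror y) ↔ lexLt y x := by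
  refine ⟨fun ⟨k, hk, hlt⟩ => ⟨k, fun i hi => ?_, ?_⟩, fun ⟨k, hk, hlt⟩ => ⟨k, fun i hi => ?_, ?_⟩⟩
  · simpa [mirror] using (hk i hi).symm
  · revert hlt; simp [mirror, Bool.lt_iff]; tauto
  · simp [mirror, hk i hi]
  · revert hlt; simp [mirror, Bool.lt_iff]; tauto

theorem shift_iterate_apply (n : ℕ) (x : Seq) (i : ℕ) : shift^[n] x i = x (n + i) := by
  induction n generalizing x with
  | zero => simp
  | succ n ih => rw [Function.iterate_succ_apply, ih]; simp only [shift]; congr 1; omega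

theorem mirror_shift_iterate (n : ℕ) (x : Seq) : mirror (shift^[n] x) = shift^[n] (mirror x) := by
  funext i; simp [mirror, shift_iterate_apply]

def cons (b : Bool) (x : Seq) : Seq
  | 0 => b
  | i + 1 => x i

@[simp] theorem cons_zero (b : Bool) (x : Seq) : cons b x 0 = b := rfl
@[simp] theorem cons_succ (b : Bool) (x : Seq) (i : ℕ) : cons b x (i + 1) = x i := rfl

theorem mirror_cons (b : Bool) (x : Seq) : mirror (cons b x) = cons (!b) (mirror x) := by
  funext i; cases i <;> rfl

theorem cons_lexLt_cons_iff {b : Bool} {x y : Seq} : lexLt (cons b x) (cons b y) ↔ lexLt x y := by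
  constructor
  · rintro ⟨_ | k, hk, hlt⟩
    · exact absurd hlt (lt_irrefl _)
    · exact ⟨k, fun i hi => hk (i + 1) (by omega), hlt⟩
  · rintro ⟨k, hk, hlt⟩
    exact ⟨k + 1, fun | 0, _ => rfl | i + 1, hi => hk i (by omega), hlt⟩

theorem cons_false_lexLt_cons_true (x y : Seq) : lexLt (cons false x) (cons true y) :=
  ⟨0, by omega, Bool.false_lt_true⟩

/-- The Thue–Morse substitution `μ : 0 ↦ 01, 1 ↦ 10`. -/
def tmSubst (x : Seq) : Seq := fun i => if i % 2 = 0 then x (i / 2) else !x (i / 2)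

theorem tmSubst_two_mul (x : Seq) (j : ℕ) : tmSubst x (2 * j) = x j := by
  simp [tmSubst]

theorem tmSubst_two_mul_add_one (x : Seq) (j : ℕ) : tmSubst x (2 * j + 1) = !x j := by
  simp [tmSubst, Nat.add_mod, Nat.add_div]

theorem mirror_tmSubst (x : Seq) : mirror (tmSubst x) = tmSubst (mirror x) := by
  funext i
  obtain ⟨j, rfl | rfl⟩ := Nat.even_or_odd' i
  · simp [mirror, tmSubst_two_mul]
  · simp [mirror, tmSubst_two_mul_add_one]

theorem tmSubst_lexLt_tmSubst_iff {x y : Seq} : lexLt (tmSubst x) (tmSubst y) ↔ lexLt x y := by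
  constructor
  · rintro ⟨k, hk, hlt⟩
    have agree : ∀ i, 2 * i < k → x i = y i := fun i hi => by
      simpa [tmSubst_two_mul] using hk (2 * i) hi
    obtain ⟨j, rfl | rfl⟩ := Nat.even_or_odd' k
    · exact ⟨j, fun i hi => agree i (by omega), by simpa [tmSubst_two_mul] using hlt⟩
    · rw [tmSubst_two_mul_add_one, tmSubst_two_mul_add_one, agree j (by omega)] at hlt
      exact absurd hlt (lt_irrefl _)
  · rintro ⟨k, hk, hlt⟩
    refine ⟨2 * k, fun i hi => ?_, by simpa [tmSubst_two_mul] using hlt⟩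
    obtain ⟨j, rfl | rfl⟩ := Nat.even_or_odd' i
    · simp [tmSubst_two_mul, hk j (by omega)]
    · simp [tmSubst_two_mul_add_one, hk j (by omega)]

theorem shift_iterate_two_mul_tmSubst (x : Seq) (j : ℕ) :
    shift^[2 * j] (tmSubst x) = tmSubst (shift^[j] x) := by
  funext i
  simp only [shift_iterate_apply, tmSubst]
  rw [show (2 * j + i) / 2 = j + i / 2 by omega, show (2 * j + i) % 2 = i % 2 by omega]

theorem shift_iterate_two_mul_add_one_tmSubst (x : Seq) (j : ℕ) :
    shift^[2 * j + 1] (tmSubst x) = cons (!x j) (tmSubst (shift^[j + 1] x)) := by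
  funext i
  cases i with
  | zero => simp [shift_iterate_apply, tmSubst_two_mul_add_one]
  | succ i =>
    rw [cons_succ, ← shift_iterate_two_mul_tmSubst, shift_iterate_apply, shift_iterate_apply]
    congr 1; omega

/-- `SigmaA a = {x | ∀ n, InBand a (σⁿ x)}`. -/
def InBand (a x : Seq) : Prop := lexLt (mirror a) x ∧ lexLt x a

def TailCond (b : Seq) (c : Bool) (w : Seq) : Prop :=
  (c = false → lexLt w b) ∧ (c = true → lexLt (mirror b) w)

/-- A one-sided relaxation of `Σ_b` that is exactly the `μ`-preimage of
`boundedTails (1 μ(b))`; the recursive upper bound on word counts is proved for it. -/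
def boundedTails (b : Seq) : Set Seq := {y | ∀ m, TailCond b (y m) (shift^[m + 1] y)}

theorem tailCond_of_inBand {b w : Seq} (c : Bool) (h : InBand b w) : TailCond b c w :=
  ⟨fun _ => h.2, fun _ => h.1⟩

theorem sigmaA_subset_boundedTails (a : Seq) : SigmaA a ⊆ boundedTails a :=
  fun _ hy m => tailCond_of_inBand _ (hy (m + 1))

theorem shift_iterate_mem_boundedTails {b y : Seq} (hy : y ∈ boundedTails b) (s : ℕ) :
    shift^[s] y ∈ boundedTails b := by
  intro m
  rw [shift_iterate_apply, ← Function.iterate_add_apply, add_comm (m + 1), ← add_assoc]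
  exact hy (s + m)

theorem mirror_mem_boundedTails {b y : Seq} (hy : y ∈ boundedTails b) :
    mirror y ∈ boundedTails b := by
  intro m
  have hm := hy m
  rw [← mirror_shift_iterate]
  constructor
  · intro h
    have := hm.2 (by simpa [mirror] using h)
    rwa [← lexLt_mirror_iff, mirror_mirror] at this
  · intro h
    exact lexLt_mirror_iff.2 (hm.1 (by simpa [mirror] using h))

theorem inBand_cons_iff {y x : Seq} {c : Bool} :
    InBand (cons true y) (cons (!c) x) ↔ TailCond (cons true y) c (cons (!c) x) := by
  cases c <;>
    simp [InBand, TailCond, mirror_cons, cons_false_lexLt_cons_true]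

theorem tailCond_cons_tmSubst_iff {b w : Seq} {c : Bool} :
    TailCond (cons true (tmSubst b)) c (cons (!c) (tmSubst w)) ↔ TailCond b c w := by
  cases c <;>
    simp [TailCond, mirror_cons, mirror_tmSubst, cons_lexLt_cons_iff, tmSubst_lexLt_tmSubst_iff]

theorem tmSubst_lexLt_cons_tmSubst {b : Seq} (hb : b 0 = true) (u : Seq) :
    lexLt (tmSubst u) (cons true (tmSubst b)) := by
  cases hu : u 0
  · refine ⟨0, by omega, ?_⟩
    have h := tmSubst_two_mul u 0
    simp_all
  · refine ⟨1, fun i hi => ?_, ?_⟩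
    · obtain rfl : i = 0 := by omega
      simpa [← tmSubst_two_mul u 0] using hu
    · have h1 := tmSubst_two_mul_add_one u 0
      have h2 := tmSubst_two_mul b 0
      simp_all

theorem inBand_tmSubst {b : Seq} (hb : b 0 = true) (u : Seq) :
    InBand (cons true (tmSubst b)) (tmSubst u) := by
  refine ⟨?_, tmSubst_lexLt_cons_tmSubst hb u⟩
  rw [← lexLt_mirror_iff, mirror_mirror, mirror_tmSubst]
  exact tmSubst_lexLt_cons_tmSubst hb _

theorem tmSubst_mem_sigmaA {b z : Seq} (hb : b 0 = true) (hz : z ∈ boundedTails b) :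
    tmSubst z ∈ SigmaA (cons true (tmSubst b)) := by
  intro n
  obtain ⟨j, rfl | rfl⟩ := Nat.even_or_odd' n
  · rw [shift_iterate_two_mul_tmSubst]
    exact inBand_tmSubst hb _
  · rw [shift_iterate_two_mul_add_one_tmSubst]
    exact inBand_cons_iff.2 (tailCond_cons_tmSubst_iff.2 (hz j))

theorem tmSubst_mem_boundedTails_iff {b z : Seq} (hb : b 0 = true) :
    tmSubst z ∈ boundedTails (cons true (tmSubst b)) ↔ z ∈ boundedTails b := by
  refine ⟨fun h j => ?_, fun hz m => ?_⟩
  · have := h (2 * j)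
    rwa [tmSubst_two_mul, shift_iterate_two_mul_add_one_tmSubst,
      tailCond_cons_tmSubst_iff] at this
  · obtain ⟨j, rfl | rfl⟩ := Nat.even_or_odd' m
    · rw [tmSubst_two_mul, shift_iterate_two_mul_add_one_tmSubst, tailCond_cons_tmSubst_iff]
      exact hz j
    · rw [show 2 * j + 1 + 1 = 2 * (j + 1) by ring, shift_iterate_two_mul_tmSubst]
      exact tailCond_of_inBand _ (inBand_tmSubst hb _)

theorem thueMorse_zero : thueMorse 0 = false := by simp [thueMorse]

theorem thueMorse_two_mul (n : ℕ) : thueMorse (2 * n) = thueMorse n := by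
  rcases Nat.eq_zero_or_pos n with rfl | hn
  · rfl
  simp [thueMorse, Nat.digits_def' (by norm_num : 1 < 2) (by omega : 0 < 2 * n)]

theorem thueMorse_two_mul_add_one (n : ℕ) : thueMorse (2 * n + 1) = !thueMorse n := by
  simp only [thueMorse, Nat.digits_def' (by norm_num : 1 < 2) (by omega : 0 < 2 * n + 1)]
  rw [show (2 * n + 1) % 2 = 1 by omega, show (2 * n + 1) / 2 = n by omega, List.count_cons]
  by_cases h : (Nat.digits 2 n).count 1 % 2 = 1 <;> simp [h] <;> omega

theorem thueMorse_two_pow (k : ℕ) : thueMorse (2 ^ k) = true := by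
  induction k with
  | zero => simpa [thueMorse_zero] using thueMorse_two_mul_add_one 0
  | succ k ih => rw [pow_succ', thueMorse_two_mul, ih]

theorem thueMorse_two_pow_add {k r : ℕ} (hr : r < 2 ^ k) :
    thueMorse (2 ^ k + r) = !thueMorse r := by
  induction k generalizing r with
  | zero =>
    obtain rfl : r = 0 := by omega
    simpa [thueMorse_zero] using thueMorse_two_mul_add_one 0
  | succ k ih =>
    obtain ⟨s, rfl | rfl⟩ := Nat.even_or_odd' r
    · rw [pow_succ', ← mul_add, thueMorse_two_mul, thueMorse_two_mul, ih (by omega)]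
    · rw [pow_succ', ← add_assoc, ← mul_add, thueMorse_two_mul_add_one,
        thueMorse_two_mul_add_one, ih (by omega)]

/-- For `k ≥ 1` this is the parameter `ω_{a*,k}'''` of the theorem (`triple_astarWord_eq`). -/
def tmBound : ℕ → Seq
  | 0 => fun _ => true
  | k + 1 => cons true (tmSubst (tmBound k))

theorem tmBound_zero_apply (k : ℕ) : tmBound k 0 = true := by
  cases k <;> rfl

theorem tmBound_apply_of_lt {k i : ℕ} (hi : i < 2 * 2 ^ k) : tmBound k i = thueMorse (i + 1) := by
  induction k generalizing i with
  | zero =>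
    obtain rfl | rfl : i = 0 ∨ i = 1 := by omega
    · exact (thueMorse_two_pow 0).symm
    · exact (thueMorse_two_pow 1).symm
  | succ k ih =>
    rcases i with _ | l
    · exact (thueMorse_two_pow 0).symm
    obtain ⟨j, rfl | rfl⟩ := Nat.even_or_odd' l
    · rw [tmBound, cons_succ, tmSubst_two_mul, ih (by rw [pow_succ] at hi; omega),
        show 2 * j + 1 + 1 = 2 * (j + 1) by ring, thueMorse_two_mul]
    · rw [tmBound, cons_succ, tmSubst_two_mul_add_one, ih (by rw [pow_succ] at hi; omega),
        show 2 * j + 1 + 1 + 1 = 2 * (j + 1) + 1 by ring, thueMorse_two_mul_add_one]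

theorem tmBound_add_two_pow {k i : ℕ} (hi : 2 ^ k ≤ i) : tmBound k (i + 2 ^ k) = tmBound k i := by
  induction k generalizing i with
  | zero => rfl
  | succ k ih =>
    obtain ⟨l, rfl⟩ : ∃ l, i = l + 1 := ⟨i - 1, by have := Nat.one_le_two_pow (n := k + 1); omega⟩
    rw [show l + 1 + 2 ^ (k + 1) = (l + 2 ^ (k + 1)) + 1 by ring, tmBound, cons_succ, cons_succ]
    obtain ⟨j, rfl | rfl⟩ := Nat.even_or_odd' l
    · rw [pow_succ', ← mul_add, tmSubst_two_mul, tmSubst_two_mul,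
        ih (by rw [pow_succ'] at hi; omega)]
    · rw [pow_succ', show 2 * j + 1 + 2 * 2 ^ k = 2 * (j + 2 ^ k) + 1 by ring,
        tmSubst_two_mul_add_one, tmSubst_two_mul_add_one]
      rcases (show 2 ^ k ≤ j ∨ j + 1 = 2 ^ k by rw [pow_succ'] at hi; omega) with hj | hj
      · rw [ih hj]
      · -- the one place where the period is not inherited: `t(2^{k+1}) = t(2^k)`
        rw [tmBound_apply_of_lt (by omega), tmBound_apply_of_lt (by omega),
          show j + 2 ^ k + 1 = 2 * (j + 1) by omega, thueMorse_two_mul]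

theorem eq_of_eqOn_of_periodic {x y : Seq} {p : ℕ} (hp : 0 < p) (hxy : ∀ i < 2 * p, x i = y i)
    (hx : ∀ i, p ≤ i → x (i + p) = x i) (hy : ∀ i, p ≤ i → y (i + p) = y i) : x = y := by
  funext i
  induction i using Nat.strong_induction_on with
  | _ i ih =>
    by_cases hi : i < 2 * p
    · exact hxy i hi
    · obtain ⟨l, rfl⟩ : ∃ l, i = l + p := ⟨i - p, by omega⟩
      rw [hx l (by omega), hy l (by omega), ih l (by omega)]

theorem astarWord_length (k : ℕ) : (astarWord k).length = 2 ^ k := by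
  simp [astarWord]

theorem astarWord_getD {k i : ℕ} (hi : i < 2 ^ k) :
    (astarWord k).getD i false = thueMorse (i + 1) := by
  simp [astarWord, hi, astar]

theorem triple_astarWord_apply_of_le {k i : ℕ} (hk : 1 ≤ k) (hi : 2 ^ k ≤ i) :
    triple (astarWord k) i = thueMorse (2 ^ k + i % 2 ^ k + 1) := by
  have hp : 2 ≤ 2 ^ k := by simpa using Nat.pow_le_pow_right (by norm_num : 0 < 2) hk
  have hmod : (i - 2 ^ k) % 2 ^ k = i % 2 ^ k := by
    rw [← Nat.sub_add_cancel hi, Nat.add_sub_cancel, Nat.add_mod_right]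
  have hr := Nat.mod_lt i (show 0 < 2 ^ k by omega)
  simp only [triple, astarWord_length, if_neg (show ¬ 2 ^ k ≤ 1 by omega),
    if_neg (show ¬ i < 2 ^ k by omega), hmod]
  split_ifs with hlast
  · rw [hlast, show 2 ^ k + (2 ^ k - 1) + 1 = 2 * 2 ^ k by omega, thueMorse_two_mul,
      thueMorse_two_pow]
  · rw [astarWord_getD hr, add_assoc, thueMorse_two_pow_add (by omega)]

theorem triple_astarWord_eq {k : ℕ} (hk : 1 ≤ k) : triple (astarWord k) = tmBound k := by
  have hp : 2 ≤ 2 ^ k := by simpa using Nat.pow_le_pow_right (by norm_num : 0 < 2) hk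
  refine eq_of_eqOn_of_periodic (by omega) (fun i hi => ?_) (fun i hi => ?_)
    (fun i hi => tmBound_add_two_pow hi)
  · rw [tmBound_apply_of_lt hi]
    by_cases hik : i < 2 ^ k
    · simp only [triple, astarWord_length, if_neg (show ¬ 2 ^ k ≤ 1 by omega), if_pos hik,
        astarWord_getD hik]
    · rw [triple_astarWord_apply_of_le hk (by omega), Nat.mod_eq_sub_mod (by omega),
        Nat.mod_eq_of_lt (by omega)]
      congr 1; omega
  · rw [triple_astarWord_apply_of_le hk (by omega), triple_astarWord_apply_of_le hk hi,
      Nat.add_mod_right]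

def window (x : Seq) (i n : ℕ) : List Bool := List.ofFn fun j : Fin n => x (i + j)

theorem window_mem_Bword {S : Set Seq} {x : Seq} (hx : x ∈ S) (i n : ℕ) :
    window x i n ∈ Bword S n :=
  ⟨by simp [window], x, hx, i, fun j hj => by simp_all [window]⟩

theorem exists_eq_window_of_mem_Bword {S : Set Seq} {n : ℕ} {w : List Bool}
    (hw : w ∈ Bword S n) : ∃ x ∈ S, ∃ i, w = window x i n := by
  obtain ⟨hlen, x, hx, i, hocc⟩ := hw
  refine ⟨x, hx, i, List.ext_getElem (by simp [window, hlen]) fun j hj _ => ?_⟩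
  have := (hocc j hj).symm
  simp_all [window]

theorem Bword_subset_range_ofFn (S : Set Seq) (n : ℕ) :
    Bword S n ⊆ Set.range (List.ofFn : (Fin n → Bool) → List Bool) := by
  intro w hw
  obtain ⟨x, -, i, rfl⟩ := exists_eq_window_of_mem_Bword hw
  exact ⟨_, rfl⟩

theorem Bword_finite (S : Set Seq) (n : ℕ) : (Bword S n).Finite :=
  (Set.finite_range _).subset (Bword_subset_range_ofFn S n)

theorem ncard_Bword_le_two_pow (S : Set Seq) (n : ℕ) : (Bword S n).ncard ≤ 2 ^ n :=
  (Set.ncard_le_ncard (Bword_subset_range_ofFn S n) (Set.finite_range _)).trans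
    (by rw [Set.ncard_range_of_injective List.ofFn_injective]; simp)

theorem Bword_mono {S S' : Set Seq} (h : S ⊆ S') (n : ℕ) : Bword S n ⊆ Bword S' n :=
  fun _ ⟨hlen, x, hx, hocc⟩ => ⟨hlen, x, h hx, hocc⟩

theorem mem_boundedTails_const_true {z : Seq} (h0 : ∀ m, ∃ i, m < i ∧ z i = false)
    (h1 : ∀ m, ∃ i, m < i ∧ z i = true) : z ∈ boundedTails (fun _ => true) := by
  intro m
  refine ⟨fun _ => ?_, fun _ => ?_⟩
  · obtain ⟨i, hmi, hi⟩ := h0 m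
    refine lexLt_const_true_iff.2 ⟨i - (m + 1), ?_⟩
    rw [shift_iterate_apply]
    convert hi using 2; omega
  · obtain ⟨i, hmi, hi⟩ := h1 m
    rw [← lexLt_mirror_iff, mirror_mirror]
    refine lexLt_const_true_iff.2 ⟨i - (m + 1), ?_⟩
    simp only [mirror, shift_iterate_apply, Bool.not_eq_false']
    convert hi using 2; omega

theorem tmSubst_iterate_mem_boundedTails {z : Seq} (hz : z ∈ boundedTails (fun _ => true))
    (k : ℕ) : tmSubst^[k] z ∈ boundedTails (tmBound k) := by
  induction k with
  | zero => exact hz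
  | succ k ih =>
    rw [Function.iterate_succ_apply', tmBound]
    exact (tmSubst_mem_boundedTails_iff (tmBound_zero_apply k)).2 ih

theorem tmSubst_iterate_mem_sigmaA {z : Seq} (hz : z ∈ boundedTails (fun _ => true)) (k : ℕ) :
    tmSubst^[k + 1] z ∈ SigmaA (tmBound (k + 1)) := by
  rw [Function.iterate_succ_apply', tmBound]
  exact tmSubst_mem_sigmaA (tmBound_zero_apply k) (tmSubst_iterate_mem_boundedTails hz k)

theorem tmSubst_iterate_apply_two_pow_mul (z : Seq) (k i : ℕ) :
    tmSubst^[k] z (2 ^ k * i) = z i := by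
  induction k with
  | zero => simp
  | succ k ih =>
    rw [Function.iterate_succ_apply', pow_succ', mul_assoc, tmSubst_two_mul, ih]

def padAlternating {M : ℕ} (u : Fin M → Bool) : Seq :=
  fun i => if h : i < M then u ⟨i, h⟩ else decide (i % 2 = 1)

theorem padAlternating_mem_boundedTails {M : ℕ} (u : Fin M → Bool) :
    padAlternating u ∈ boundedTails (fun _ => true) := by
  refine mem_boundedTails_const_true (fun m => ⟨2 * (m + M + 1), by omega, ?_⟩)
    (fun m => ⟨2 * (m + M) + 1, by omega, ?_⟩)
  · simp [padAlternating, show ¬ 2 * (m + M + 1) < M by omega]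
  · simp [padAlternating, show ¬ 2 * (m + M) + 1 < M by omega, Nat.add_mod]

theorem two_pow_le_ncard_Bword_sigmaA (k n : ℕ) :
    2 ^ (n / 2 ^ (k + 1)) ≤ (Bword (SigmaA (tmBound (k + 1))) n).ncard := by
  have : Finite (Bword (SigmaA (tmBound (k + 1))) n) := (Bword_finite _ n).to_subtype
  let f : (Fin (n / 2 ^ (k + 1)) → Bool) → Bword (SigmaA (tmBound (k + 1))) n := fun u =>
    ⟨_, window_mem_Bword (tmSubst_iterate_mem_sigmaA (padAlternating_mem_boundedTails u) k) 0 n⟩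
  have hf : Function.Injective f := by
    intro u u' huu'
    funext i
    have hi : 2 ^ (k + 1) * i < n :=
      ((Nat.mul_lt_mul_left (Nat.two_pow_pos _)).2 i.2).trans_le (Nat.mul_div_le n _)
    have := congrFun (List.ofFn_injective (congrArg Subtype.val huu')) ⟨_, hi⟩
    simpa [tmSubst_iterate_apply_two_pow_mul, padAlternating] using this
  calc 2 ^ (n / 2 ^ (k + 1)) = Nat.card (Fin (n / 2 ^ (k + 1)) → Bool) := by simp
    _ ≤ _ := Nat.card_le_card_of_injective f hf
    _ = _ := Nat.card_coe_set_eq _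

theorem tmBound_one_apply (t : ℕ) : tmBound 1 t = decide (t = 0 ∨ t % 2 = 1) := by
  rcases t with _ | l
  · rfl
  obtain ⟨j, rfl | rfl⟩ := Nat.even_or_odd' l
  · simp [tmBound, tmSubst_two_mul, Nat.add_mod]
  · simp [tmBound, tmSubst_two_mul_add_one, Nat.add_mod]

theorem tmBound_succ_lexLe_tmBound_one (k : ℕ) : lexLe (tmBound (k + 1)) (tmBound 1) := by
  simp only [lexLe_iff_not_lexLt, tmBound, cons_lexLt_cons_iff, tmSubst_lexLt_tmSubst_iff]
  exact lexLe_iff_not_lexLt.1 (lexLe_const_true _)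

section Decomposition

variable {b y : Seq}

theorem shift_iterate_eq_tmSubst (s : ℕ) (h : ∀ j, y (s + 2 * j + 1) ≠ y (s + 2 * j)) :
    shift^[s] y = tmSubst fun j => y (s + 2 * j) := by
  funext i
  obtain ⟨j, rfl | rfl⟩ := Nat.even_or_odd' i
  · rw [shift_iterate_apply, tmSubst_two_mul]
  · rw [shift_iterate_apply, tmSubst_two_mul_add_one, ← add_assoc, Bool.eq_not]
    exact h j

/-- For `b ≤ 11(01)^∞`, no `y ∈ boundedTails b` contains a factor `0 1 1 (0 1)^j 1`: the tail
after that `0` would start with `1 1 (0 1)^j 1 ≻ 11(01)^∞ ≥ b`. The mirror image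
`1 0 0 (1 0)^j 0` is excluded likewise. -/
theorem false_of_odd_window (hb : lexLe b (tmBound 1)) (hy : y ∈ boundedTails b) {p d : ℕ}
    (hd : Odd d) (hp : y p ≠ y (p + 1)) (hpair : y (p + 1) = y (p + 2))
    (halt : ∀ t, p + 2 ≤ t → t < p + 1 + d → y (t + 1) ≠ y t)
    (hpair' : y (p + 1 + d) = y (p + 2 + d)) : False := by
  wlog hc : y (p + 1) = true generalizing y
  · refine this (mirror_mem_boundedTails hy) ?_ ?_ (fun t h1 h2 => ?_) ?_ ?_ <;>
      simp_all [mirror]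
  have hY : ∀ t ≤ d, y (p + 1 + t) = tmBound 1 t := by
    intro t ht
    induction t with
    | zero => simpa [tmBound_one_apply] using hc
    | succ t ih =>
      rcases Nat.eq_zero_or_pos t with rfl | ht0
      · simpa [tmBound_one_apply, hc] using hpair.symm
      rw [← add_assoc, Bool.eq_not.2 (halt (p + 1 + t) (by omega) (by omega)), ih (by omega),
        tmBound_one_apply, tmBound_one_apply]
      have : t ≠ 0 := by omega
      by_cases h : t % 2 = 1 <;> simp [h, this] <;> omega
  have hd2 : (d + 1) % 2 = 0 := by rcases hd with ⟨e, rfl⟩; omega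
  have hbY : lexLt (tmBound 1) (shift^[p + 1] y) := by
    refine ⟨d + 1, fun i hi => by rw [shift_iterate_apply, hY i (by omega)], ?_⟩
    rw [shift_iterate_apply, show p + 1 + (d + 1) = p + 2 + d by ring, ← hpair', hY d le_rfl,
      tmBound_one_apply, tmBound_one_apply]
    simp [hd2, Nat.odd_iff.1 hd]
  have hp0 : y p = false := by simpa [hc] using hp
  exact lexLt_asymm ((hy p).1 hp0) (lexLt_of_lexLe_of_lexLt hb hbY)

theorem apply_eq_apply_zero_of_odd_window (hb : lexLe b (tmBound 1))
    (hy : y ∈ boundedTails b) :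
    ∀ p d, Odd d → y p = y (p + 1) → (∀ t, p + 1 ≤ t → t < p + d → y (t + 1) ≠ y t) →
      y (p + d) = y (p + d + 1) → ∀ t ≤ p + 1, y t = y 0 := by
  intro p
  induction p with
  | zero =>
    intro d _ h01 _ _ t ht
    obtain rfl | rfl : t = 0 ∨ t = 1 := by omega
    exacts [rfl, h01.symm]
  | succ p ih =>
    intro d hd hpair halt hpair' t ht
    by_cases hp : y p = y (p + 1)
    · have hconst := ih 1 odd_one hp (fun t _ _ => by omega) hpair
      rcases Nat.lt_or_ge t (p + 2) with htp | htp
      · exact hconst t (by omega)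
      · rw [show t = p + 1 + 1 by omega, ← hpair, hconst (p + 1) le_rfl]
    · exact (false_of_odd_window hb hy hd hp hpair (fun t h1 h2 => halt t h1 (by omega))
        (by rw [show p + 2 + d = p + 1 + d + 1 by ring]; exact hpair')).elim

theorem exists_odd_window_of_odd_gap :
    ∀ g p q, q - p = g → p < q → Odd (q - p) → y p = y (p + 1) → y q = y (q + 1) →
      ∃ p' d, p ≤ p' ∧ Odd d ∧ y p' = y (p' + 1) ∧
        (∀ t, p' + 1 ≤ t → t < p' + d → y (t + 1) ≠ y t) ∧ y (p' + d) = y (p' + d + 1) := by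
  intro g
  induction g using Nat.strong_induction_on with
  | _ g ih =>
    intro p q hg hpq hodd hp hq
    by_cases hmid : ∃ t, p < t ∧ t < q ∧ y t = y (t + 1)
    · obtain ⟨t, hpt, htq, ht⟩ := hmid
      by_cases hto : Odd (t - p)
      · exact ih (t - p) (by omega) p t rfl hpt hto hp ht
      · have hqt : Odd (q - t) := by
          rw [Nat.odd_iff] at hodd ⊢; rw [Nat.not_odd_iff] at hto; omega
        obtain ⟨p', d, h, rest⟩ := ih (q - t) (by omega) t q rfl htq hqt ht hq
        exact ⟨p', d, by omega, rest⟩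
    · push Not at hmid
      refine ⟨p, q - p, le_rfl, hodd, hp, fun t h1 h2 h => hmid t (by omega) (by omega) h.symm, ?_⟩
      rwa [Nat.add_sub_cancel' hpq.le]

theorem apply_eq_apply_zero_of_odd_gap (hb : lexLe b (tmBound 1)) (hy : y ∈ boundedTails b)
    {p q : ℕ} (hpq : p < q) (hodd : Odd (q - p)) (hp : y p = y (p + 1)) (hq : y q = y (q + 1)) :
    ∀ t ≤ p + 1, y t = y 0 := by
  obtain ⟨p', d, hpp', hd, hpair, halt, hpair'⟩ :=
    exists_odd_window_of_odd_gap (q - p) p q rfl hpq hodd hp hq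
  exact fun t ht => apply_eq_apply_zero_of_odd_window hb hy p' d hd hpair halt hpair' t (by omega)

theorem boundedTails_decomposition (hb : lexLe b (tmBound 1)) (hy : y ∈ boundedTails b) :
    (∀ i, y i = y 0) ∨ ∃ (r : ℕ) (q : Bool) (z : Seq), (∀ i < r, y i = y 0) ∧
      (q = true → y r = !y 0) ∧ shift^[r + q.toNat] y = tmSubst z := by
  by_cases hconst : ∀ i, y i = y 0
  · exact Or.inl hconst
  right
  push Not at hconst
  classical
  let r := Nat.find hconst
  have hr : y r ≠ y 0 := Nat.find_spec hconst
  have hbefore : ∀ i < r, y i = y 0 := fun i hi => not_not.1 (Nat.find_min hconst hi)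
  have hr0 : 0 < r := Nat.pos_of_ne_zero fun h => hr (by rw [h])
  have no_odd_gap : ∀ P Q, r ≤ P → P < Q → Odd (Q - P) → y P = y (P + 1) → y Q ≠ y (Q + 1) :=
    fun P Q hP hPQ hodd hpP hpQ =>
      hr (apply_eq_apply_zero_of_odd_gap hb hy hPQ hodd hpP hpQ r (by omega))
  by_cases hA : ∀ j, y (r + 2 * j + 1) ≠ y (r + 2 * j)
  · exact ⟨r, false, _, hbefore, by simp, shift_iterate_eq_tmSubst r hA⟩
  · push Not at hA
    obtain ⟨j₀, hj₀⟩ := hA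
    refine ⟨r, true, _, hbefore, fun _ => Bool.eq_not.2 hr, shift_iterate_eq_tmSubst _ ?_⟩
    intro j hj
    have hj' : y (r + 2 * j + 1) = y (r + 2 * j + 1 + 1) := by
      simp only [Bool.toNat_true] at hj; convert hj.symm using 2 <;> ring
    rcases lt_or_gt_of_ne (show r + 2 * j₀ ≠ r + 2 * j + 1 by omega) with h | h
    · exact no_odd_gap _ _ (by omega) h (by rw [Nat.odd_iff]; omega) hj₀.symm hj'
    · exact no_odd_gap _ _ (by omega) h (by rw [Nat.odd_iff]; omega) hj' hj₀.symm

end Decomposition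

theorem wordSeq_window {z : Seq} {i m j : ℕ} (hj : j < m) :
    wordSeq (window z i m) j = z (i + j) := by
  simp [wordSeq, window, hj]

theorem tmSubst_apply_add_eq {z : Seq} {e l m : ℕ} (h : e % 2 + l < 2 * m) :
    tmSubst z (e + l) = tmSubst (wordSeq (window z (e / 2) m)) (e % 2 + l) := by
  have hsplit : tmSubst z (e + l) = tmSubst (shift^[e / 2] z) (e % 2 + l) := by
    rw [← shift_iterate_two_mul_tmSubst, shift_iterate_apply]
    congr 1; omega
  rw [hsplit]
  simp only [tmSubst, wordSeq_window (show (e % 2 + l) / 2 < m by omega), shift_iterate_apply]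

/-- Codes `(t, v, q, p, u)` for the words of `v^r v̄^q μ(z)`; there are `8n |B_m|` of them
with `t < n`, `p < 2` and `u ∈ B_m`. -/
def decodeWord (n : ℕ) (c : ℕ × Bool × Bool × ℕ × List Bool) : List Bool :=
  let ⟨t, v, q, p, u⟩ := c
  List.ofFn fun j : Fin n =>
    if (j : ℕ) < t then v else if (j : ℕ) = t ∧ q = true then !v
    else tmSubst (wordSeq u) (p + (j - t - q.toNat))

theorem window_eq_replicate_or_decodeWord {y z : Seq} {v q : Bool} {r : ℕ}
    (hbefore : ∀ i < r, y i = v) (hr : q = true → y r = !v)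
    (htail : shift^[r + q.toNat] y = tmSubst z) {n m : ℕ} (hnm : n < 2 * m) (i : ℕ) :
    window y i n = List.replicate n v ∨ ∃ t < n, ∃ q' : Bool, window y i n =
      decodeWord n (t, v, q', (i - r - q.toNat) % 2, window z ((i - r - q.toNat) / 2) m) := by
  by_cases hin : n = 0 ∨ i + n ≤ r
  · left
    exact List.ext_getElem (by simp [window]) fun j hj _ => by
      simpa [window] using hbefore (i + j) (by simp [window] at hj; omega)
  right
  set q' := q && decide (i ≤ r)
  have hq : q.toNat ≤ 1 := Bool.toNat_le q
  have hq' : (i ≤ r → q'.toNat = q.toNat) ∧ (r < i → q'.toNat = 0) := by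
    cases q <;> by_cases hir : i ≤ r <;> simp [q', hir]
  have hq'1 : q' = true ↔ q'.toNat = 1 := by cases q' <;> simp
  refine ⟨r - i, by omega, q', ?_⟩
  generalize hu : window z ((i - r - q.toNat) / 2) m = u
  simp only [window, decodeWord]
  congr 1
  funext ⟨j, hj⟩
  dsimp only
  split_ifs with h1 h2
  · exact hbefore _ (by omega)
  · obtain ⟨rfl, h⟩ := h2
    obtain ⟨hqt, hir⟩ : q = true ∧ i ≤ r := by simpa [q'] using h
    rw [show i + (r - i) = r by omega]
    exact hr hqt
  · rw [hq'1] at h2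
    have hy : y (i + j) = tmSubst z (i + j - (r + q.toNat)) := by
      rw [← htail, shift_iterate_apply]
      congr 1
      omega
    rw [hy, ← hu, ← tmSubst_apply_add_eq (by omega)]
    congr 1
    omega

theorem ncard_Bword_le_of_decomposition {S S' : Set Seq} {n m : ℕ} (hnm : n < 2 * m)
    (hdec : ∀ y ∈ S, (∀ i, y i = y 0) ∨ ∃ (r : ℕ) (q : Bool) (z : Seq), z ∈ S' ∧
      (∀ i < r, y i = y 0) ∧ (q = true → y r = !y 0) ∧ shift^[r + q.toNat] y = tmSubst z) :
    (Bword S n).ncard ≤ 2 + 8 * n * (Bword S' m).ncard := by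
  classical
  set codes := Finset.range n ×ˢ (Finset.univ : Finset Bool) ×ˢ (Finset.univ : Finset Bool) ×ˢ
    Finset.range 2 ×ˢ (Bword_finite S' m).toFinset
  have hsub : Bword S n ⊆
      ↑({List.replicate n true, List.replicate n false} ∪ codes.image (decodeWord n)) := by
    intro w hw
    obtain ⟨y, hy, i, rfl⟩ := exists_eq_window_of_mem_Bword hw
    have hrep : ∀ v, window y i n = List.replicate n v →
        window y i n ∈ ({List.replicate n true, List.replicate n false} : Finset _) := by
      intro v h; cases v <;> simp [h]
    simp only [Finset.coe_union, Set.mem_union, Finset.mem_coe, Finset.mem_image]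
    rcases hdec y hy with hconst | ⟨r, q, z, hz, hbefore, hr, htail⟩
    · refine Or.inl (hrep (y 0) (List.ext_getElem (by simp [window]) fun j _ _ => ?_))
      simp [window, hconst]
    rcases window_eq_replicate_or_decodeWord hbefore hr htail hnm i with h | ⟨t, ht, q', h⟩
    · exact Or.inl (hrep _ h)
    · refine Or.inr ⟨_, ?_, h.symm⟩
      simp [codes, ht, window_mem_Bword hz, Nat.lt_succ_iff.1 (Nat.mod_lt _ two_pos)]
  calc (Bword S n).ncard ≤ _ := Set.ncard_le_ncard hsub (Finset.finite_toSet _)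
    _ = _ := Set.ncard_coe_finset _
    _ ≤ 2 + codes.card := (Finset.card_union_le _ _).trans
        (add_le_add (Finset.card_le_two) Finset.card_image_le)
    _ = 2 + 8 * n * (Bword S' m).ncard := by
        simp [codes, Set.ncard_eq_toFinset_card _ (Bword_finite S' m)]; ring

theorem ncard_Bword_boundedTails_succ_le (k n : ℕ) :
    (Bword (boundedTails (tmBound (k + 1))) n).ncard ≤
      2 + 8 * n * (Bword (boundedTails (tmBound k)) (n / 2 + 1)).ncard := by
  refine ncard_Bword_le_of_decomposition (by omega) fun y hy => ?_
  refine (boundedTails_decomposition (tmBound_succ_lexLe_tmBound_one k) hy).imp_right ?_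
  rintro ⟨r, q, z, hbefore, hr, htail⟩
  have hz := shift_iterate_mem_boundedTails hy (r + q.toNat)
  rw [htail, tmBound, tmSubst_mem_boundedTails_iff (tmBound_zero_apply k)] at hz
  exact ⟨r, q, z, hz, hbefore, hr, htail⟩

theorem ncard_Bword_boundedTails_le (k n : ℕ) :
    (Bword (boundedTails (tmBound k)) n).ncard ≤ (18 * (n + 1)) ^ k * 2 ^ (n / 2 ^ k) := by
  induction k generalizing n with
  | zero => simpa using ncard_Bword_le_two_pow _ n
  | succ k ih =>
    rcases Nat.eq_zero_or_pos n with rfl | hn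
    · exact (ncard_Bword_le_two_pow _ 0).trans (by simpa using Nat.one_le_pow _ _ (by norm_num))
    set Y := (18 * (n + 1)) ^ k * 2 ^ (n / 2 ^ (k + 1))
    have hY : 1 ≤ Y := Nat.one_le_iff_ne_zero.2 (by positivity)
    have hexp : (n / 2 + 1) / 2 ^ k ≤ n / 2 ^ (k + 1) + 1 := by
      rw [pow_succ', ← Nat.div_div_eq_div_mul]
      exact (Nat.div_le_div_right (by have := Nat.one_le_two_pow (n := k); omega)).trans
        (Nat.add_div_right _ (Nat.two_pow_pos k)).le
    have hX : (Bword (boundedTails (tmBound k)) (n / 2 + 1)).ncard ≤ 2 * Y := by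
      refine (ih _).trans ?_
      calc (18 * (n / 2 + 1 + 1)) ^ k * 2 ^ ((n / 2 + 1) / 2 ^ k)
          ≤ (18 * (n + 1)) ^ k * 2 ^ (n / 2 ^ (k + 1) + 1) := by gcongr <;> omega
        _ = 2 * Y := by rw [pow_succ]; ring
    calc _ ≤ 2 + 8 * n * (2 * Y) :=
          (ncard_Bword_boundedTails_succ_le k n).trans (by gcongr)
      _ ≤ 18 * (n + 1) * Y := by nlinarith
      _ = _ := by rw [pow_succ']; ring

theorem tendsto_logb_mul_add_one_div {C : ℝ} (hC : 0 < C) :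
    Tendsto (fun n : ℕ => Real.logb 2 (C * (n + 1)) / n) atTop (𝓝 0) := by
  have hlin : Tendsto (fun n : ℕ => C * ((n : ℝ) + 1)) atTop atTop :=
    (tendsto_natCast_atTop_atTop.atTop_add tendsto_const_nhds).const_mul_atTop hC
  have := ((Real.tendsto_pow_log_div_mul_add_atTop C⁻¹ (-1) 1 (inv_ne_zero hC.ne')).comp
    hlin).const_mul (Real.log 2)⁻¹
  rw [mul_zero] at this
  refine this.congr fun n => ?_
  simp only [Function.comp_apply, pow_one, Real.logb]
  field_simp
  ring

theorem tendsto_logb_div_of_bounds {N : ℕ → ℕ} {d C k : ℕ} (hd : 0 < d) (hC : 0 < C)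
    (hlow : ∀ n, 2 ^ (n / d) ≤ N n) (hup : ∀ n, N n ≤ (C * (n + 1)) ^ k * 2 ^ (n / d)) :
    Tendsto (fun n : ℕ => Real.logb 2 (N n) / n) atTop (𝓝 (1 / d)) := by
  have hlogb_two_pow (e : ℕ) : Real.logb 2 ((2 : ℝ) ^ e) = e := by rw [Real.logb_pow]; simp
  have hN (n : ℕ) : (0 : ℝ) < N n := by
    exact_mod_cast (Nat.one_le_two_pow).trans (hlow n)
  have hfloor (n : ℕ) : ((n / d : ℕ) : ℝ) ≤ n / d := Nat.cast_div_le
  have hfloor' (n : ℕ) : (n : ℝ) / d - 1 ≤ ((n / d : ℕ) : ℝ) := by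
    have := Nat.lt_div_mul_add (a := n) hd
    rw [sub_le_iff_le_add, div_le_iff₀ (by exact_mod_cast hd)]
    exact_mod_cast (by nlinarith : n ≤ (n / d + 1) * d)
  have hlower : Tendsto (fun n : ℕ => 1 / (d : ℝ) - 1 / n) atTop (𝓝 (1 / d)) := by
    simpa using tendsto_one_div_atTop_nhds_zero_nat.const_sub (1 / (d : ℝ))
  have hupper : Tendsto (fun n : ℕ => k * (Real.logb 2 (C * (n + 1)) / n) + 1 / (d : ℝ))
      atTop (𝓝 (1 / d)) := by
    simpa using ((tendsto_logb_mul_add_one_div (C := C) (by exact_mod_cast hC)).const_mul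
      (k : ℝ)).add_const (1 / (d : ℝ))
  refine tendsto_of_tendsto_of_tendsto_of_le_of_le' hlower hupper ?_ ?_ <;>
    filter_upwards [eventually_gt_atTop 0] with n hn <;>
    have hn' : (0 : ℝ) < n := by exact_mod_cast hn
  · have hlog : ((n / d : ℕ) : ℝ) ≤ Real.logb 2 (N n) := by
      rw [← hlogb_two_pow]
      exact Real.logb_le_logb_of_le (by norm_num) (by positivity) (by exact_mod_cast hlow n)
    rw [le_div_iff₀ hn', sub_mul, div_mul_cancel₀ _ hn'.ne', one_div_mul_eq_div]
    linarith [hfloor' n]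
  · have hlog : Real.logb 2 (N n) ≤ k * Real.logb 2 (C * (n + 1)) + n / d := by
      have hpos : (0 : ℝ) < C * (n + 1) := by positivity
      calc Real.logb 2 (N n) ≤ Real.logb 2 ((C * (n + 1)) ^ k * 2 ^ (n / d)) :=
            Real.logb_le_logb_of_le (by norm_num) (hN n) (by exact_mod_cast hup n)
        _ = k * Real.logb 2 (C * (n + 1)) + (n / d : ℕ) := by
            rw [Real.logb_mul (by positivity) (by positivity), Real.logb_pow, hlogb_two_pow]
        _ ≤ _ := by linarith [hfloor n]
    rw [div_le_iff₀ hn', add_mul, mul_assoc, div_mul_cancel₀ _ hn'.ne', one_div_mul_eq_div]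
    exact hlog

theorem ncard_Bword_sigmaA_le (k n : ℕ) :
    (Bword (SigmaA (tmBound k)) n).ncard ≤ (18 * (n + 1)) ^ k * 2 ^ (n / 2 ^ k) :=
  (Set.ncard_le_ncard (Bword_mono (sigmaA_subset_boundedTails _) n) (Bword_finite _ n)).trans
    (ncard_Bword_boundedTails_le k n)

/-- h_top of the symmetric subshift with parameter (omega_{a*,k})'''
equals 1/2^k, as a genuine limit. -/
theorem statement7 (k : ℕ) (hk : 1 ≤ k) :
    Filter.Tendsto
      (fun n : ℕ =>
        Real.logb 2 ((Bword (SigmaA (triple (astarWord k))) n).ncard) / (n : ℝ))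
      Filter.atTop (nhds ((1 : ℝ) / 2 ^ k)) := by
  rw [triple_astarWord_eq hk]
  obtain ⟨j, rfl⟩ : ∃ j, k = j + 1 := ⟨k - 1, by omega⟩
  simpa using tendsto_logb_div_of_bounds (Nat.two_pow_pos (j + 1)) (by norm_num : 0 < 18)
    (two_pow_le_ncard_Bword_sigmaA j) (ncard_Bword_sigmaA_le (j + 1))

end Paper
end

section
/- Let i ≥ 0 and let ω and υ be distinct i-irreducible words. Then the lexicographic open intervals (ω0^∞, ω''') and (υ0^∞, υ''') are disjoint. -/
open Filter Topology

namespace Paper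

lemma bool_lt {x y : Bool} (h : x < y) : x = false ∧ y = true := by
  cases x <;> cases y <;> simp_all [Bool.lt_iff]

lemma lexLt_trans {x y z : Seq} (h1 : lexLt x y) (h2 : lexLt y z) : lexLt x z := by
  obtain ⟨k1, a1, l1⟩ := h1
  obtain ⟨k2, a2, l2⟩ := h2
  rcases lt_trichotomy k1 k2 with h | h | h
  · exact ⟨k1, fun i hi => (a1 i hi).trans (a2 i (hi.trans h)), by rw [← a2 k1 h]; exact l1⟩
  · subst h
    obtain ⟨_, hy⟩ := bool_lt l1
    obtain ⟨hy', _⟩ := bool_lt l2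
    rw [hy] at hy'; exact absurd hy' (by simp)
  · exact ⟨k2, fun i hi => (a1 i (hi.trans h)).trans (a2 i hi), by rw [a1 k2 h]; exact l2⟩

lemma lexLt_irrefl {x : Seq} (h : lexLt x x) : False := by
  obtain ⟨k, _, l⟩ := h; exact lt_irrefl _ l

lemma between_agree {a b x : Seq} {n : ℕ} (h1 : lexLt a x) (h2 : lexLt x b)
    (hab : ∀ j < n, a j = b j) : ∀ j < n, x j = a j := by
  obtain ⟨k1, a1, l1⟩ := h1
  obtain ⟨k2, a2, l2⟩ := h2
  by_cases hk1 : n ≤ k1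
  · exact fun j hj => (a1 j (lt_of_lt_of_le hj hk1)).symm
  by_cases hk2 : n ≤ k2
  · exact fun j hj => (a2 j (lt_of_lt_of_le hj hk2)).trans (hab j hj).symm
  push_neg at hk1 hk2
  exfalso
  rcases lt_trichotomy k1 k2 with h | h | h
  · have h' := a2 k1 h
    rw [h', ← hab k1 hk1] at l1; exact lt_irrefl _ l1
  · subst h
    obtain ⟨_, h2'⟩ := bool_lt l1
    obtain ⟨h3', _⟩ := bool_lt l2
    rw [h2'] at h3'; exact absurd h3' (by simp)
  · have h' := a1 k2 h
    rw [← h', hab k2 hk2] at l2; exact lt_irrefl _ l2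

lemma triple_eq_of_lt {w : List Bool} (h2 : 2 ≤ w.length) {j : ℕ} (hj : j < w.length) :
    triple w j = w.getD j false := by
  unfold triple
  rw [if_neg (by omega), if_pos hj]

lemma wordSeq_eq_triple {w : List Bool} (hne : w ≠ []) (hlast : w.getLast? = some true)
    {j : ℕ} (hj : j < w.length) : wordSeq w j = triple w j := by
  rcases Nat.lt_or_ge w.length 2 with h | h
  · have h1 : w.length = 1 := by
      have := List.length_pos_iff.mpr hne; omega
    obtain ⟨b, rfl⟩ := List.length_eq_one_iff.mp h1
    have hb : b = true := by simpa using hlast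
    subst hb
    have hj0 : j = 0 := by simp at hj; omega
    subst hj0
    simp [wordSeq, triple]
  · rw [triple_eq_of_lt h hj]; rfl

lemma astarWord_getD_s9 {k j : ℕ} (hj : j < 2 ^ k) :
    (astarWord k).getD j false = astar j := by
  have hl : (astarWord k).length = 2 ^ k := by simp [astarWord]
  rw [List.getD_eq_getElem _ _ (by omega)]
  simp [astarWord]

lemma astar_zero : astar 0 = true := by
  show thueMorse 1 = true
  unfold thueMorse
  norm_num

/-- key contradiction for short words -/
lemma no_short (L U x : Seq) (n : ℕ) (hLU : ∀ j < n, L j = U j)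
    (hx : ∀ j, x j = true → j < n)
    (h1 : lexLt L x) (h2 : lexLe x U) : False := by
  obtain ⟨k, ak, lk⟩ := h1
  obtain ⟨kt, kf⟩ := bool_lt lk
  have hkn : k < n := hx k kf
  rcases h2 with ⟨m, am, lm⟩ | heq
  · obtain ⟨mf, mt⟩ := bool_lt lm
    rcases lt_trichotomy k m with h | h | h
    · have h' := am k h
      rw [kf, ← hLU k hkn, kt] at h'
      exact Bool.noConfusion h'
    · subst h; rw [kf] at mf; exact Bool.noConfusion mf
    · have h1' := ak m h
      have h2' := hLU m (h.trans hkn)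
      rw [mf] at h1'
      rw [mt, h1'] at h2'
      exact Bool.noConfusion h2'
  · have : L k = x k := by rw [heq, hLU k hkn]
    rw [kt, kf] at this
    exact Bool.noConfusion this

lemma getD_last {w : List Bool} (hne : w ≠ []) (hlast : w.getLast? = some true) :
    w.getD (w.length - 1) false = true := by
  have hp := List.length_pos_iff.mpr hne
  rw [List.getD_eq_getElem _ _ (by omega)]
  rw [List.getLast?_eq_getElem?] at hlast
  simpa [List.getElem?_eq_getElem (show w.length - 1 < w.length by omega)] using hlast

lemma prefix_case (i : ℕ) (w u : List Bool) (hw : IIrreducible i w) (hu : IIrreducible i u)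
    (hpre : ∀ j < w.length, w.getD j false = u.getD j false) (hlen : w.length < u.length)
    (x : Seq) (hx1 : lexLt (wordSeq w) x ∧ lexLt x (triple w))
    (hx2 : lexLt (wordSeq u) x ∧ lexLt x (triple u)) : False := by
  obtain ⟨hw1, hw2, hw3, hw4⟩ := hw
  obtain ⟨hu1, hu2, hu3, hu4⟩ := hu
  by_cases h2i : 2 ^ i < w.length
  · -- apply i-irreducibility of u at j = w.length
    have htake : u.take w.length = w := by
      apply List.ext_getElem
      · simp; omega
      · intro n h1 h2
        rw [List.getElem_take]
        rw [← List.getD_eq_getElem u false (by omega), ← List.getD_eq_getElem w false (by simpa using h2)]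
        exact (hpre n (by simpa using h2)).symm
    have hlastD : u.getD (w.length - 1) false = true := by
      rw [← hpre (w.length - 1) (by have := List.length_pos_iff.mpr hw1; omega)]
      exact getD_last hw1 hw2
    have ht := hu4 w.length h2i hlen hlastD
    rw [htake] at ht
    exact lexLt_irrefl (lexLt_trans (lexLt_trans hx1.2 ht) hx2.1)
  · -- w.length ≤ 2^i : contradiction with i-sequence property of w
    push_neg at h2i
    have hxs : ∀ j, wordSeq w j = true → j < 2 ^ i := by
      intro j hj
      by_contra hc
      push_neg at hc
      rw [wordSeq, List.getD_eq_default _ _ (by omega)] at hj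
      exact Bool.noConfusion hj
    by_cases hi0 : i = 0
    · subst hi0
      rw [IsISequence, if_pos rfl] at hw3
      refine no_short (triple (astarWord 1)) (fun _ => true) (wordSeq w) 1 ?_ hxs hw3.1 (Or.inl hw3.2)
      intro j hj
      have hj0 : j = 0 := by omega
      subst hj0
      rw [triple_eq_of_lt (by simp [astarWord]) (by simp [astarWord]), astarWord_getD_s9 (by norm_num), astar_zero]
    · rw [IsISequence, if_neg hi0] at hw3
      refine no_short (triple (astarWord (i + 1))) (triple (astarWord i)) (wordSeq w) (2 ^ i) ?_ hxs hw3.1 hw3.2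
      intro j hj
      have h1 : j < 2 ^ (i + 1) := lt_of_lt_of_le hj (by apply pow_le_pow_right₀ <;> omega)
      have hi1 : 1 ≤ i := by omega
      have h2a : (2 : ℕ) ≤ 2 ^ i := by
        calc (2 : ℕ) = 2 ^ 1 := by norm_num
        _ ≤ 2 ^ i := by apply pow_le_pow_right₀ <;> omega
      have h2b : (2 : ℕ) ≤ 2 ^ (i + 1) := le_trans h2a (by apply pow_le_pow_right₀ <;> omega)
      rw [triple_eq_of_lt (by simpa [astarWord] using h2b) (by simpa [astarWord] using h1),
        triple_eq_of_lt (by simpa [astarWord] using h2a) (by simpa [astarWord] using hj),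
        astarWord_getD_s9 h1, astarWord_getD_s9 hj]

/-- distinct i-irreducible words give disjoint open intervals
(w0^inf, w'''). -/
theorem statement9 (i : ℕ) (w u : List Bool) (hw : IIrreducible i w)
    (hu : IIrreducible i u) (hne : w ≠ u) :
    Disjoint {x : Seq | lexLt (wordSeq w) x ∧ lexLt x (triple w)}
      {x : Seq | lexLt (wordSeq u) x ∧ lexLt x (triple u)} := by
  rw [Set.disjoint_left]
  intro x hx1 hx2
  simp only [Set.mem_setOf_eq] at hx1 hx2
  by_cases hd : ∀ j < min w.length u.length, w.getD j false = u.getD j false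
  · rcases lt_trichotomy w.length u.length with hl | hl | hl
    · exact prefix_case i w u hw hu (fun j hj => hd j (by omega)) hl x hx1 hx2
    · apply hne
      apply List.ext_getElem hl
      intro n h1 h2
      rw [← List.getD_eq_getElem w false h1, ← List.getD_eq_getElem u false h2]
      exact hd n (by omega)
    · exact prefix_case i u w hu hw (fun j hj => (hd j (by omega)).symm) hl x hx2 hx1
  · push_neg at hd
    obtain ⟨j, hj, hne'⟩ := hd
    have haw : x j = wordSeq w j :=
      between_agree hx1.1 hx1.2 (fun n hn => wordSeq_eq_triple hw.1 hw.2.1 hn) j (by omega)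
    have hau : x j = wordSeq u j :=
      between_agree hx2.1 hx2.2 (fun n hn => wordSeq_eq_triple hu.1 hu.2.1 hn) j (by omega)
    exact hne' (haw.symm.trans hau)

end Paper
end

section
/- Let n ≥ 3 and let a ∈ 𝓔 (the exceptional set) satisfy 1^n0^∞ ⪯ a ⪯ 1^{n+1}0^∞ in the lexicographic order. If the word 0^{n-1} does not occur in a, then the symmetric subshift Σ_a has the specification property. -/
open Filter Topology

namespace Paper

private lemma lexLt_of (p q : Seq) (k : ℕ) (h : ∀ i < k, p i = q i)
    (h1 : p k = false) (h2 : q k = true) : lexLt p q :=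
  ⟨k, h, by rw [h1, h2]; decide⟩

private lemma lexLt_dest {p q : Seq} (h : lexLt p q) :
    ∃ k, (∀ i < k, p i = q i) ∧ p k = false ∧ q k = true := by
  obtain ⟨k, h1, h2⟩ := h
  refine ⟨k, h1, ?_, ?_⟩ <;> revert h2 <;> cases hp : p k <;> cases hq : q k <;> decide

private lemma shift_iter : ∀ (k : ℕ) (x : Seq) (i : ℕ), shift^[k] x i = x (i + k) := by
  intro k
  induction k with
  | zero => intro x i; rfl
  | succ k ih =>
    intro x i
    rw [Function.iterate_succ_apply, ih (shift x) i]
    show x (i + k + 1) = x (i + (k + 1))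
    congr 1

private lemma sigmaA_shift {a y : Seq} (hy : y ∈ SigmaA a) (j : ℕ) :
    shift^[j] y ∈ SigmaA a := by
  intro k
  have h := hy (k + j)
  rwa [Function.iterate_add_apply] at h

private lemma zmem
    (n : ℕ) (hn : 3 ≤ n) (a : Seq)
    (hA1 : ∀ i < n, a i = true)
    (x : Seq) (hx : x ∈ SigmaA a) (N : ℕ) (hN : 1 ≤ N)
    (y : Seq) (hy : y ∈ SigmaA a)
    (W : ℕ → Bool) (c : Bool) (g : ℕ) (hg1 : 1 ≤ g) (hg2 : g ≤ n - 1)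
    (hWc : ∀ i < g, W i = c) (hWg : W g = !c)
    (hWalt : ∀ i, g ≤ i → i + 2 < n + 3 → W (i + 1) = !W i)
    (hWlast : W (n + 2) = !(y 0))
    (Ha : ∀ s, 1 ≤ s → s ≤ N → (∀ i < s, x (N - s + i) = a i) →
      ∃ q, q < n + 3 ∧ (∀ j < q, W j = a (s + j)) ∧ W q = false ∧ a (s + q) = true)
    (Hb : ∀ t, 1 ≤ t → t ≤ N → (∀ i < t, x (N - t + i) = !a i) →
      ∃ q, q < n + 3 ∧ (∀ j < q, W j = !a (t + j)) ∧ W q = true ∧ a (t + q) = true) :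
    (fun j => if j < N then x j else if j - N < n + 3 then W (j - N)
      else y (j - N - (n + 3))) ∈ SigmaA a := by
  set z : Seq := fun j => if j < N then x j else if j - N < n + 3 then W (j - N)
      else y (j - N - (n + 3)) with hzdef
  have hz1 : ∀ j, j < N → z j = x j := by
    intro j hj; simp only [hzdef]; rw [if_pos hj]
  have hz2 : ∀ j, j < n + 3 → z (N + j) = W j := by
    intro j hj
    simp only [hzdef]
    rw [if_neg (by omega)]
    have h1 : N + j - N = j := by omega
    rw [h1, if_pos hj]
  have hz3 : ∀ j, z (N + (n + 3) + j) = y j := by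
    intro j
    simp only [hzdef]
    rw [if_neg (by omega), if_neg (by omega)]
    congr 1; omega
  have hmir : ∀ i, mirror a i = !a i := fun i => rfl
  have ha0 : a 0 = true := hA1 0 (by omega)
  have ha1 : a 1 = true := hA1 1 (by omega)
  intro k
  have hsz : ∀ i, shift^[k] z i = z (i + k) := fun i => shift_iter k z i
  rcases Nat.lt_or_ge k N with hkN | hkN
  · -- region 1
    have hs1 : 1 ≤ N - k := by omega
    constructor
    · obtain ⟨p, hag, hpf, hpt⟩ := lexLt_dest (hx k).1
      rcases Nat.lt_or_ge p (N - k) with hps | hps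
      · refine lexLt_of _ _ p (fun i hi => ?_) hpf ?_
        · rw [hsz, hz1 _ (by omega)]
          have h1 := hag i hi
          rwa [shift_iter] at h1
        · rw [hsz, hz1 _ (by omega)]
          rwa [shift_iter] at hpt
      · have hmatch : ∀ i < N - k, x (N - (N - k) + i) = !a i := by
          intro i hi
          have h1 := hag i (by omega)
          rw [shift_iter, hmir] at h1
          have h2 : N - (N - k) + i = i + k := by omega
          rw [h2, ← h1]
        obtain ⟨q, hq, hWa, hWq, haq⟩ := Hb (N - k) hs1 (by omega) hmatch
        refine lexLt_of _ _ (N - k + q) (fun i hi => ?_) ?_ ?_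
        · rcases Nat.lt_or_ge i (N - k) with h | h
          · rw [hsz, hz1 _ (by omega)]
            have h1 := hag i (by omega)
            rwa [shift_iter] at h1
          · rw [hsz]
            have h2 : i + k = N + (i - (N - k)) := by omega
            rw [h2, hz2 _ (by omega), hWa _ (by omega), hmir]
            have h3 : N - k + (i - (N - k)) = i := by omega
            rw [h3]
        · rw [hmir, haq]; rfl
        · rw [hsz]
          have h2 : N - k + q + k = N + q := by omega
          rw [h2, hz2 _ hq, hWq]
    · obtain ⟨p, hag, hpf, hpt⟩ := lexLt_dest (hx k).2
      rcases Nat.lt_or_ge p (N - k) with hps | hps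
      · refine lexLt_of _ _ p (fun i hi => ?_) ?_ hpt
        · rw [hsz, hz1 _ (by omega)]
          have h1 := hag i hi
          rwa [shift_iter] at h1
        · rw [hsz, hz1 _ (by omega)]
          rwa [shift_iter] at hpf
      · have hmatch : ∀ i < N - k, x (N - (N - k) + i) = a i := by
          intro i hi
          have h1 := hag i (by omega)
          rw [shift_iter] at h1
          have h2 : N - (N - k) + i = i + k := by omega
          rw [h2]; exact h1
        obtain ⟨q, hq, hWa, hWq, haq⟩ := Ha (N - k) hs1 (by omega) hmatch
        refine lexLt_of _ _ (N - k + q) (fun i hi => ?_) ?_ haq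
        · rcases Nat.lt_or_ge i (N - k) with h | h
          · rw [hsz, hz1 _ (by omega)]
            have h1 := hag i (by omega)
            rwa [shift_iter] at h1
          · rw [hsz]
            have h2 : i + k = N + (i - (N - k)) := by omega
            rw [h2, hz2 _ (by omega), hWa _ (by omega)]
            have h3 : N - k + (i - (N - k)) = i := by omega
            rw [h3]
        · rw [hsz]
          have h2 : N - k + q + k = N + q := by omega
          rw [h2, hz2 _ hq, hWq]
  · rcases Nat.lt_or_ge k (N + (n + 3)) with hkm | hkm
    · -- region 2
      have hQ : ∀ i, (k - N) + i < n + 3 → shift^[k] z i = W ((k - N) + i) := by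
        intro i hi
        rw [hsz]
        have h2 : i + k = N + ((k - N) + i) := by omega
        rw [h2, hz2 _ hi]
      have hQy : ∀ i, n + 3 ≤ (k - N) + i → shift^[k] z i = y ((k - N) + i - (n + 3)) := by
        intro i hi
        rw [hsz]
        have h2 : i + k = N + (n + 3) + ((k - N) + i - (n + 3)) := by omega
        rw [h2, hz3]
      rcases Nat.lt_or_ge (k - N) g with hog | hog
      · cases hc : c
        · constructor
          · refine lexLt_of _ _ (g - (k - N)) (fun i hi => ?_) ?_ ?_
            · rw [hmir, hA1 i (by omega), hQ i (by omega), hWc _ (by omega), hc]; rfl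
            · rw [hmir, hA1 _ (by omega)]; rfl
            · rw [hQ _ (by omega)]
              have h2 : (k - N) + (g - (k - N)) = g := by omega
              rw [h2, hWg, hc]; rfl
          · refine lexLt_of _ _ 0 (by omega) ?_ ha0
            rw [hQ 0 (by omega)]
            have h2 : (k - N) + 0 = k - N := by omega
            rw [h2, hWc _ hog, hc]
        · constructor
          · refine lexLt_of _ _ 0 (by omega) ?_ ?_
            · rw [hmir, ha0]; rfl
            · rw [hQ 0 (by omega)]
              have h2 : (k - N) + 0 = k - N := by omega
              rw [h2, hWc _ hog, hc]
          · refine lexLt_of _ _ (g - (k - N)) (fun i hi => ?_) ?_ ?_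
            · rw [hA1 i (by omega), hQ i (by omega), hWc _ (by omega), hc]
            · rw [hQ _ (by omega)]
              have h2 : (k - N) + (g - (k - N)) = g := by omega
              rw [h2, hWg, hc]; rfl
            · exact hA1 _ (by omega)
      · rcases Nat.lt_or_ge (k - N) (n + 1) with ho1 | ho1
        · have hW1 : W ((k - N) + 1) = !W (k - N) := hWalt (k - N) hog (by omega)
          have hc0 : shift^[k] z 0 = W (k - N) := by
            rw [hQ 0 (by omega)]
            have h2 : (k - N) + 0 = k - N := by omega
            rw [h2]
          have hc1 : shift^[k] z 1 = !W (k - N) := by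
            rw [hQ 1 (by omega), hW1]
          cases hWo : W (k - N)
          · constructor
            · refine lexLt_of _ _ 1 (fun i hi => ?_) ?_ ?_
              · have h0 : i = 0 := by omega
                subst h0
                rw [hmir, ha0, hc0, hWo]; rfl
              · rw [hmir, ha1]; rfl
              · rw [hc1, hWo]; rfl
            · refine lexLt_of _ _ 0 (by omega) ?_ ha0
              rw [hc0, hWo]
          · constructor
            · refine lexLt_of _ _ 0 (by omega) ?_ ?_
              · rw [hmir, ha0]; rfl
              · rw [hc0, hWo]
            · refine lexLt_of _ _ 1 (fun i hi => ?_) ?_ ha1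
              · have h0 : i = 0 := by omega
                subst h0
                rw [ha0, hc0, hWo]
              · rw [hc1, hWo]; rfl
        · rcases Nat.lt_or_ge (k - N) (n + 2) with ho2 | ho2
          · -- k - N = n + 1
            have hc0 : shift^[k] z 0 = W (n + 1) := by
              rw [hQ 0 (by omega)]; congr 1; omega
            have hc1 : shift^[k] z 1 = !(y 0) := by
              rw [hQ 1 (by omega)]
              have h2 : (k - N) + 1 = n + 2 := by omega
              rw [h2, hWlast]
            have hc2 : shift^[k] z 2 = y 0 := by
              rw [hQy 2 (by omega)]; congr 1; omega
            have ha2 : a 2 = true := hA1 2 (by omega)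
            cases hWo : W (n + 1) <;> cases hy0 : y 0
            · constructor
              · refine lexLt_of _ _ 1 (fun i hi => ?_) ?_ ?_
                · have h0 : i = 0 := by omega
                  subst h0
                  rw [hmir, ha0, hc0, hWo]; rfl
                · rw [hmir, ha1]; rfl
                · rw [hc1, hy0]; rfl
              · refine lexLt_of _ _ 0 (by omega) ?_ ha0
                rw [hc0, hWo]
            · constructor
              · refine lexLt_of _ _ 2 (fun i hi => ?_) ?_ ?_
                · interval_cases i
                  · rw [hmir, ha0, hc0, hWo]; rfl
                  · rw [hmir, ha1, hc1, hy0]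
                · rw [hmir, ha2]; rfl
                · rw [hc2, hy0]
              · refine lexLt_of _ _ 0 (by omega) ?_ ha0
                rw [hc0, hWo]
            · constructor
              · refine lexLt_of _ _ 0 (by omega) ?_ ?_
                · rw [hmir, ha0]; rfl
                · rw [hc0, hWo]
              · refine lexLt_of _ _ 2 (fun i hi => ?_) ?_ ha2
                · interval_cases i
                  · rw [hc0, hWo, ha0]
                  · rw [hc1, hy0, ha1]; rfl
                · rw [hc2, hy0]
            · constructor
              · refine lexLt_of _ _ 0 (by omega) ?_ ?_
                · rw [hmir, ha0]; rfl
                · rw [hc0, hWo]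
              · refine lexLt_of _ _ 1 (fun i hi => ?_) ?_ ha1
                · have h0 : i = 0 := by omega
                  subst h0
                  rw [ha0, hc0, hWo]
                · rw [hc1, hy0]; rfl
          · -- k - N = n + 2
            have hc0 : shift^[k] z 0 = !(y 0) := by
              rw [hQ 0 (by omega)]
              have h2 : (k - N) + 0 = n + 2 := by omega
              rw [h2, hWlast]
            have hc1 : shift^[k] z 1 = y 0 := by
              rw [hQy 1 (by omega)]; congr 1; omega
            cases hy0 : y 0
            · constructor
              · refine lexLt_of _ _ 0 (by omega) ?_ ?_
                · rw [hmir, ha0]; rfl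
                · rw [hc0, hy0]; rfl
              · refine lexLt_of _ _ 1 (fun i hi => ?_) ?_ ha1
                · have h0 : i = 0 := by omega
                  subst h0
                  rw [ha0, hc0, hy0]; rfl
                · rw [hc1, hy0]
            · constructor
              · refine lexLt_of _ _ 1 (fun i hi => ?_) ?_ ?_
                · have h0 : i = 0 := by omega
                  subst h0
                  rw [hmir, ha0, hc0, hy0]
                · rw [hmir, ha1]; rfl
                · rw [hc1, hy0]
              · refine lexLt_of _ _ 0 (by omega) ?_ ha0
                rw [hc0, hy0]; rfl
    · -- region 3
      have heq : shift^[k] z = shift^[k - N - (n + 3)] y := by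
        funext i
        rw [hsz, shift_iter]
        have h2 : i + k = N + (n + 3) + (i + (k - N - (n + 3))) := by omega
        rw [h2, hz3]
      rw [heq]
      exact hy _
private lemma getD_replicate' (m : ℕ) (c : Bool) (j : ℕ) :
    (List.replicate m c).getD j false = if j < m then c else false := by
  rw [List.getD_eq_getElem?_getD, List.getElem?_replicate]
  split <;> rename_i h <;> simp [h]

private lemma getD_ofFn' (m : ℕ) (f : ℕ → Bool) (j : ℕ) (hj : j < m) :
    (List.ofFn (fun t : Fin m => f t)).getD j false = f j := by
  rw [List.getD_eq_getElem?_getD, List.getElem?_ofFn]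
  simp [List.ofFnNthVal, hj]

private lemma key (n : ℕ) (hn : 3 ≤ n) (a : Seq)
    (hA1 : ∀ i < n, a i = true) (hA2 : a n = false)
    (hgap : ∀ i : ℕ, ∃ j, j < n - 1 ∧ a (i + j) = true) :
    HasSpecification (SigmaA a) := by
  refine ⟨n + 3, ?_⟩
  rintro u ⟨hul, x, hx, i, hxu⟩ v ⟨hvl, y', hy', i', hyv⟩
  set N := i + u.length with hNdef
  have hN : 1 ≤ N := by omega
  set y := shift^[i'] y' with hydef
  have hy : y ∈ SigmaA a := sigmaA_shift hy' i'
  have hyv2 : ∀ j, j < v.length → y j = v.getD j false := by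
    intro j hj
    rw [hydef, shift_iter]
    rw [(by omega : j + i' = i' + j)]
    exact hyv j hj
  -- no constant block of length n+1 in x
  have hrun : ∀ k (bb : Bool), (∀ j, j ≤ n → x (k + j) = bb) → False := by
    intro k bb hall
    cases bb
    · obtain ⟨p, hag, hpf, hpt⟩ := lexLt_dest (hx k).1
      rcases Nat.lt_or_ge p (n + 1) with h | h
      · rw [shift_iter, (by omega : p + k = k + p), hall p (by omega)] at hpt
        exact Bool.noConfusion hpt
      · have h1 := hag n (by omega)
        rw [shift_iter, (by omega : n + k = k + n), hall n le_rfl] at h1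
        have h2 : mirror a n = !a n := rfl
        rw [h2, hA2] at h1
        exact Bool.noConfusion h1
    · obtain ⟨p, hag, hpf, hpt⟩ := lexLt_dest (hx k).2
      rcases Nat.lt_or_ge p (n + 1) with h | h
      · rw [shift_iter, (by omega : p + k = k + p), hall p (by omega)] at hpf
        exact Bool.noConfusion hpf
      · have h1 := hag n (by omega)
        rw [shift_iter, (by omega : n + k = k + n), hall n le_rfl, hA2] at h1
        exact Bool.noConfusion h1
  -- the terminal run of x₀…x_{N-1}
  have hbex : ∃ j, N ≤ j ∨ x (N - 1 - j) ≠ x (N - 1) := ⟨N, Or.inl le_rfl⟩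
  set e := Nat.find hbex with hedef
  have he2 : e ≤ N := Nat.find_le (Or.inl le_rfl)
  have he3 : ∀ j, j < e → x (N - 1 - j) = x (N - 1) := by
    intro j hj
    have h1 := Nat.find_min hbex hj
    push_neg at h1
    exact h1.2
  have he1 : 1 ≤ e := by
    rcases Nat.eq_zero_or_pos e with h | h
    · exfalso
      have h1 := Nat.find_spec hbex
      rw [← hedef, h] at h1
      rcases h1 with h1 | h1
      · omega
      · simp at h1
    · exact h
  have he4 : e < N → x (N - 1 - e) = !x (N - 1) := by
    intro h
    have h1 := Nat.find_spec hbex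
    rw [← hedef] at h1
    rcases h1 with h1 | h1
    · omega
    · revert h1
      cases x (N - 1 - e) <;> cases x (N - 1) <;> decide
  have heN : e ≤ n := by
    by_contra h
    push_neg at h
    apply hrun (N - 1 - n) (x (N - 1))
    intro j hj
    rw [(by omega : N - 1 - n + j = N - 1 - (n - j))]
    exact he3 (n - j) (by omega)
  -- least-true-position tools
  have hleast : ∀ s : ℕ, ∃ q, q ≤ n - 2 ∧ (∀ j, j < q → a (s + j) = false) ∧ a (s + q) = true := by
    intro s
    obtain ⟨j, hj, ht⟩ := hgap s
    have hex : ∃ q, a (s + q) = true := ⟨j, ht⟩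
    refine ⟨Nat.find hex, ?_, ?_, Nat.find_spec hex⟩
    · have h5 : Nat.find hex ≤ j := Nat.find_le ht
      omega
    · intro j' hj'
      simpa using Nat.find_min hex hj'
  have hwin : ∀ s, e + 1 ≤ s → (∀ j, j < e → a (s - 1 - j) = false) →
      ∃ q, e + q ≤ n - 2 ∧ (∀ j, j < q → a (s + j) = false) ∧ a (s + q) = true := by
    intro s hs hpre
    obtain ⟨j, hj, ht⟩ := hgap (s - e)
    have hje : e ≤ j := by
      by_contra h
      push_neg at h
      rw [(by omega : s - e + j = s - 1 - (e - 1 - j)), hpre _ (by omega)] at ht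
      exact Bool.noConfusion ht
    have h3 : a (s + (j - e)) = true := by
      rw [(by omega : s + (j - e) = s - e + j)]
      exact ht
    have hex : ∃ q, a (s + q) = true := ⟨j - e, h3⟩
    refine ⟨Nat.find hex, ?_, ?_, Nat.find_spec hex⟩
    · have h5 : Nat.find hex ≤ j - e := Nat.find_le h3
      omega
    · intro j' hj'
      simpa using Nat.find_min hex hj'
  -- the bridging word family
  set Wf : Bool → ℕ → ℕ → Bool := fun c g i2 =>
    if i2 = n + 2 then !(y 0) else if i2 < g then c
    else (if (i2 - g) % 2 = 0 then !c else c) with hWfdef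
  have hWc : ∀ (c : Bool) (g : ℕ), g ≤ n - 1 → ∀ i2, i2 < g → Wf c g i2 = c := by
    intro c g hg i2 hig
    simp only [hWfdef]
    rw [if_neg (by omega), if_pos hig]
  have hWg : ∀ (c : Bool) (g : ℕ), g ≤ n - 1 → Wf c g g = !c := by
    intro c g hg
    simp only [hWfdef]
    rw [if_neg (by omega), if_neg (by omega), if_pos (by omega)]
  have hWalt : ∀ (c : Bool) (g : ℕ), g ≤ n - 1 →
      ∀ i2, g ≤ i2 → i2 + 2 < n + 3 → Wf c g (i2 + 1) = !Wf c g i2 := by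
    intro c g hg i2 hgi hi
    simp only [hWfdef]
    rw [if_neg (show ¬(i2 + 1 = n + 2) by omega), if_neg (show ¬(i2 + 1 < g) by omega),
      if_neg (show ¬(i2 = n + 2) by omega), if_neg (show ¬(i2 < g) by omega)]
    by_cases hp : (i2 - g) % 2 = 0
    · rw [if_pos hp, if_neg (show ¬(i2 + 1 - g) % 2 = 0 by omega), Bool.not_not]
    · rw [if_neg hp, if_pos (show (i2 + 1 - g) % 2 = 0 by omega)]
  have hWlast : ∀ (c : Bool) (g : ℕ), Wf c g (n + 2) = !(y 0) := by
    intro c g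
    simp only [hWfdef]
    simp
  -- main case analysis: choose the guard
  have hmain : ∃ (c : Bool) (g : ℕ), 1 ≤ g ∧ g ≤ n - 1 ∧
      (∀ s, 1 ≤ s → s ≤ N → (∀ i2, i2 < s → x (N - s + i2) = a i2) →
        ∃ q, q < n + 3 ∧ (∀ j, j < q → Wf c g j = a (s + j)) ∧ Wf c g q = false ∧ a (s + q) = true) ∧
      (∀ t, 1 ≤ t → t ≤ N → (∀ i2, i2 < t → x (N - t + i2) = !a i2) →
        ∃ q, q < n + 3 ∧ (∀ j, j < q → Wf c g j = !a (t + j)) ∧ Wf c g q = true ∧ a (t + q) = true) := by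
    cases hbv : x (N - 1)
    · -- last symbol 0
      by_cases HSa : ∃ s, 1 ≤ s ∧ s ≤ N ∧ ∀ i2, i2 < s → x (N - s + i2) = a i2
      · -- Case A : c = false, g = n - 1 - e
        obtain ⟨s₀, hs01, hs02, hs0m⟩ := HSa
        have hSn : ∀ s, 1 ≤ s → s ≤ N → (∀ i2, i2 < s → x (N - s + i2) = a i2) → n + 1 ≤ s := by
          intro s h1 h2 hm
          by_contra h
          push_neg at h
          have h3 := hm (s - 1) (by omega)
          rw [(by omega : N - s + (s - 1) = N - 1), hbv, hA1 (s - 1) (by omega)] at h3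
          exact Bool.noConfusion h3
        have hpre : ∀ s, 1 ≤ s → s ≤ N → (∀ i2, i2 < s → x (N - s + i2) = a i2) →
            ∀ j, j < e → a (s - 1 - j) = false := by
          intro s h1 h2 hm j hj
          have hns := hSn s h1 h2 hm
          have h3 := hm (s - 1 - j) (by omega)
          rw [(by omega : N - s + (s - 1 - j) = N - 1 - j), he3 j hj, hbv] at h3
          exact h3.symm
        obtain ⟨q₀, hq₀, -, -⟩ := hwin s₀ (by have := hSn s₀ hs01 hs02 hs0m; omega)
          (hpre s₀ hs01 hs02 hs0m)
        have hen2 : e ≤ n - 2 := by omega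
        refine ⟨false, n - 1 - e, by omega, by omega, ?_, ?_⟩
        · intro s h1 h2 hm
          obtain ⟨q, hqe, hzr, htr⟩ := hwin s (by have := hSn s h1 h2 hm; omega) (hpre s h1 h2 hm)
          refine ⟨q, by omega, ?_, ?_, htr⟩
          · intro j hj
            rw [hWc false (n - 1 - e) (by omega) j (by omega), hzr j hj]
          · rw [hWc false (n - 1 - e) (by omega) q (by omega)]
        · intro t h1 h2 hm
          have hn1 := hSn s₀ hs01 hs02 hs0m
          have hte : t ≤ e := by
            by_contra h
            push_neg at h
            have h3 := hm (t - 1 - e) (by omega)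
            rw [(by omega : N - t + (t - 1 - e) = N - 1 - e), he4 (by omega), hbv] at h3
            have h4 : a (t - 1 - e) = false := by
              cases hv : a (t - 1 - e)
              · rfl
              · rw [hv] at h3
                exact Bool.noConfusion h3
            have h5 : n + 1 + e ≤ t := by
              by_contra h6
              push_neg at h6
              rw [hA1 (t - 1 - e) (by omega)] at h4
              exact Bool.noConfusion h4
            rcases Nat.lt_or_ge t s₀ with hts | hts
            · obtain ⟨j, hj, hjt⟩ := hgap (s₀ - t)
              have h7 := hm j (by omega)
              have h8 := hs0m (s₀ - t + j) (by omega)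
              rw [(by omega : N - s₀ + (s₀ - t + j) = N - t + j)] at h8
              have h9 : a (s₀ - t + j) = false := by
                rw [h7, hA1 j (by omega)] at h8
                cases hv : a (s₀ - t + j)
                · rfl
                · rw [hv] at h8
                  exact Bool.noConfusion h8
              rw [hjt] at h9
              exact Bool.noConfusion h9
            · obtain ⟨j, hj, hjt⟩ := hgap (t - s₀)
              have h7 := hs0m j (by omega)
              have h8 := hm (t - s₀ + j) (by omega)
              rw [(by omega : N - t + (t - s₀ + j) = N - s₀ + j), h7, hA1 j (by omega)] at h8
              have h9 : a (t - s₀ + j) = false := by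
                cases hv : a (t - s₀ + j)
                · rfl
                · rw [hv] at h8
                  exact Bool.noConfusion h8
              rw [hjt] at h9
              exact Bool.noConfusion h9
          refine ⟨n - 1 - e, by omega, ?_, ?_, ?_⟩
          · intro j hj
            rw [hWc false (n - 1 - e) (by omega) j hj, hA1 (t + j) (by omega)]
            rfl
          · rw [hWg false (n - 1 - e) (by omega)]
            rfl
          · exact hA1 (t + (n - 1 - e)) (by omega)
      · -- Case B : c = true, g = n - 1
        refine ⟨true, n - 1, by omega, le_rfl, ?_, ?_⟩
        · intro s h1 h2 hm
          exact absurd ⟨s, h1, h2, hm⟩ HSa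
        · intro t h1 h2 hm
          obtain ⟨q, hq, hzr, htr⟩ := hleast t
          refine ⟨q, by omega, ?_, ?_, htr⟩
          · intro j hj
            rw [hWc true (n - 1) (by omega) j (by omega), hzr j hj]
            rfl
          · rw [hWc true (n - 1) (by omega) q (by omega)]
    · -- last symbol 1
      by_cases HSb : ∃ t, 1 ≤ t ∧ t ≤ N ∧ ∀ i2, i2 < t → x (N - t + i2) = !a i2
      · -- Case C : c = true, g = n - 1 - e
        obtain ⟨t₀, ht01, ht02, ht0m⟩ := HSb
        have hTn : ∀ t, 1 ≤ t → t ≤ N → (∀ i2, i2 < t → x (N - t + i2) = !a i2) → n + 1 ≤ t := by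
          intro t h1 h2 hm
          by_contra h
          push_neg at h
          have h3 := hm (t - 1) (by omega)
          rw [(by omega : N - t + (t - 1) = N - 1), hbv, hA1 (t - 1) (by omega)] at h3
          exact Bool.noConfusion h3
        have hpre : ∀ t, 1 ≤ t → t ≤ N → (∀ i2, i2 < t → x (N - t + i2) = !a i2) →
            ∀ j, j < e → a (t - 1 - j) = false := by
          intro t h1 h2 hm j hj
          have hnt := hTn t h1 h2 hm
          have h3 := hm (t - 1 - j) (by omega)
          rw [(by omega : N - t + (t - 1 - j) = N - 1 - j), he3 j hj, hbv] at h3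
          cases hv : a (t - 1 - j)
          · rfl
          · rw [hv] at h3
            exact Bool.noConfusion h3
        obtain ⟨q₀, hq₀, -, -⟩ := hwin t₀ (by have := hTn t₀ ht01 ht02 ht0m; omega)
          (hpre t₀ ht01 ht02 ht0m)
        have hen2 : e ≤ n - 2 := by omega
        have hn1 := hTn t₀ ht01 ht02 ht0m
        refine ⟨true, n - 1 - e, by omega, by omega, ?_, ?_⟩
        · intro s h1 h2 hm
          have hsn2 : s ≤ n - 2 := by
            by_contra h
            push_neg at h
            rcases Nat.lt_or_ge s t₀ with hts | hts
            · obtain ⟨j, hj, hjt⟩ := hgap (t₀ - s)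
              have h7 := hm j (by omega)
              have h8 := ht0m (t₀ - s + j) (by omega)
              rw [(by omega : N - t₀ + (t₀ - s + j) = N - s + j), h7, hA1 j (by omega)] at h8
              have h9 : a (t₀ - s + j) = false := by
                cases hv : a (t₀ - s + j)
                · rfl
                · rw [hv] at h8
                  exact Bool.noConfusion h8
              rw [hjt] at h9
              exact Bool.noConfusion h9
            · obtain ⟨j, hj, hjt⟩ := hgap (s - t₀)
              have h7 := ht0m j (by omega)
              have h8 := hm (s - t₀ + j) (by omega)
              rw [(by omega : N - s + (s - t₀ + j) = N - t₀ + j), h7, hA1 j (by omega)] at h8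
              have h9 : a (s - t₀ + j) = false := by
                cases hv : a (s - t₀ + j)
                · rfl
                · rw [hv] at h8
                  exact Bool.noConfusion h8
              rw [hjt] at h9
              exact Bool.noConfusion h9
          have hse : s ≤ e := by
            by_contra h
            push_neg at h
            have h3 := hm (s - 1 - e) (by omega)
            rw [(by omega : N - s + (s - 1 - e) = N - 1 - e), he4 (by omega), hbv,
              hA1 (s - 1 - e) (by omega)] at h3
            exact Bool.noConfusion h3
          refine ⟨n - 1 - e, by omega, ?_, ?_, ?_⟩
          · intro j hj
            rw [hWc true (n - 1 - e) (by omega) j hj, hA1 (s + j) (by omega)]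
          · rw [hWg true (n - 1 - e) (by omega)]
            rfl
          · exact hA1 (s + (n - 1 - e)) (by omega)
        · intro t h1 h2 hm
          obtain ⟨q, hqe, hzr, htr⟩ := hwin t (by have := hTn t h1 h2 hm; omega) (hpre t h1 h2 hm)
          refine ⟨q, by omega, ?_, ?_, htr⟩
          · intro j hj
            rw [hWc true (n - 1 - e) (by omega) j (by omega), hzr j hj]
            rfl
          · rw [hWc true (n - 1 - e) (by omega) q (by omega)]
      · -- Case D : c = false, g = n - 1
        refine ⟨false, n - 1, by omega, le_rfl, ?_, ?_⟩
        · intro s h1 h2 hm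
          obtain ⟨q, hq, hzr, htr⟩ := hleast s
          refine ⟨q, by omega, ?_, ?_, htr⟩
          · intro j hj
            rw [hWc false (n - 1) (by omega) j (by omega), hzr j hj]
          · rw [hWc false (n - 1) (by omega) q (by omega)]
        · intro t h1 h2 hm
          exact absurd ⟨t, h1, h2, hm⟩ HSb
  obtain ⟨c, g, hg1, hg2, Ha, Hb⟩ := hmain
  have hzmem := zmem n hn a hA1 x hx N hN y hy (Wf c g) c g hg1 hg2
    (hWc c g hg2) (hWg c g hg2) (hWalt c g hg2) (hWlast c g) Ha Hb
  set z : Seq := fun j => if j < N then x j else if j - N < n + 3 then Wf c g (j - N)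
      else y (j - N - (n + 3)) with hzdef
  have hz1 : ∀ j, j < N → z j = x j := by
    intro j hj
    simp only [hzdef]
    rw [if_pos hj]
  have hz2 : ∀ j, j < n + 3 → z (N + j) = Wf c g j := by
    intro j hj
    simp only [hzdef]
    rw [if_neg (by omega)]
    rw [(by omega : N + j - N = j), if_pos hj]
  have hz3 : ∀ j, z (N + (n + 3) + j) = y j := by
    intro j
    simp only [hzdef]
    rw [if_neg (by omega), if_neg (by omega)]
    congr 1
    omega
  refine ⟨List.ofFn (fun t : Fin (n + 3) => Wf c g t), by simp, ?_, z, hzmem, i, ?_⟩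
  · simp only [List.length_append, List.length_ofFn]
    omega
  · intro j hj
    simp only [List.length_append, List.length_ofFn] at hj
    rcases Nat.lt_or_ge j u.length with h | h
    · rw [List.getD_append _ _ false j (by simp; omega),
        List.getD_append _ _ false j (by omega),
        hz1 (i + j) (by omega)]
      exact hxu j h
    · rcases Nat.lt_or_ge j (u.length + (n + 3)) with h2 | h2
      · rw [List.getD_append _ _ false j (by simp; omega),
          List.getD_append_right _ _ false j (by omega),
          getD_ofFn' (n + 3) (Wf c g) (j - u.length) (by omega)]
        rw [(by omega : i + j = N + (j - u.length)), hz2 (j - u.length) (by omega)]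
      · rw [List.getD_append_right _ _ false j (by simp; omega)]
        have hlen : (u ++ List.ofFn fun t : Fin (n + 3) => Wf c g t).length
            = u.length + (n + 3) := by simp
        rw [hlen]
        rw [(by omega : i + j = N + (n + 3) + (j - (u.length + (n + 3)))), hz3]
        exact hyv2 (j - (u.length + (n + 3))) (by omega)
/-- for a in the exceptional set with 1^n 0^inf <= a <= 1^{n+1} 0^inf
(n >= 3), if 0^{n-1} does not occur in a then Sigma_a has specification. -/
theorem statement17 (n : ℕ) (hn : 3 ≤ n) (a : Seq) (hE : a ∈ exceptionalSet)
    (h1 : lexLe (wordSeq (List.replicate n true)) a)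
    (h2 : lexLe a (wordSeq (List.replicate (n + 1) true)))
    (h0 : ¬ occursIn (List.replicate (n - 1) false) a) :
    HasSpecification (SigmaA a) := by
  have hgap : ∀ i : ℕ, ∃ j, j < n - 1 ∧ a (i + j) = true := by
    intro i
    by_contra h
    push_neg at h
    apply h0
    refine ⟨i, fun j hj => ?_⟩
    rw [List.length_replicate] at hj
    rw [getD_replicate', if_pos hj]
    have h2 := h j hj
    cases hv : a (i + j)
    · rfl
    · exact absurd hv h2
  have hA1 : ∀ i < n, a i = true := by
    rcases h1 with h1 | h1
    · obtain ⟨p, hag, hpf, hpt⟩ := lexLt_dest h1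
      have hpn : n ≤ p := by
        by_contra h
        push_neg at h
        have h3 : wordSeq (List.replicate n true) p = true := by
          show (List.replicate n true).getD p false = true
          rw [getD_replicate', if_pos h]
        rw [h3] at hpf
        exact Bool.noConfusion hpf
      intro i2 hi
      have h4 := hag i2 (by omega)
      rw [← h4]
      show (List.replicate n true).getD i2 false = true
      rw [getD_replicate', if_pos hi]
    · exfalso
      obtain ⟨j, hj, hjt⟩ := hgap n
      rw [← h1] at hjt
      have h3 : wordSeq (List.replicate n true) (n + j) = false := by
        show (List.replicate n true).getD (n + j) false = false
        rw [getD_replicate', if_neg (by omega)]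
      rw [h3] at hjt
      exact Bool.noConfusion hjt
  have hA2 : a n = false := by
    rcases h2 with h2 | h2
    · obtain ⟨p, hag, hpf, hpt⟩ := lexLt_dest h2
      have hpn : p < n + 1 := by
        by_contra h
        push_neg at h
        have h3 : wordSeq (List.replicate (n + 1) true) p = false := by
          show (List.replicate (n + 1) true).getD p false = false
          rw [getD_replicate', if_neg (by omega)]
        rw [h3] at hpt
        exact Bool.noConfusion hpt
      have hpe : p = n := by
        by_contra h
        rw [hA1 p (by omega)] at hpf
        exact Bool.noConfusion hpf
      rw [← hpe]
      exact hpf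
    · exfalso
      obtain ⟨j, hj, hjt⟩ := hgap (n + 1)
      rw [h2] at hjt
      have h3 : wordSeq (List.replicate (n + 1) true) (n + 1 + j) = false := by
        show (List.replicate (n + 1) true).getD (n + 1 + j) false = false
        rw [getD_replicate', if_neg (by omega)]
      rw [h3] at hjt
      exact Bool.noConfusion hjt
  exact key n hn a hA1 hA2 hgap

end Paper
end
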